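/- arXiv:1507.03221 — 8 statements merged into one kernel-verified Lean document; each statement's English description precedes it below -/
import Mathlib

section
/- For a finite partially ordered set P with d elements, the chain polytope C(P), defined as the set of points x in ℝ^d with x_i ≥ 0 for all i and x_{i_1} + ... + x_{i_k} ≤ 1 for every chain p_{i_1} < ... < p_{i_k} in P, is a d-dimensional convex polytope whose vertices are exactly the characteristic vectors ρ(A) of antichains A of P. -/
/-!
An antichain meets a chain at most once, so `ρ(A) ∈ C(P)` for every antichain `A`; being a
`0/1` vector, `ρ(A)` is even a vertex of the unit cube, which contains `C(P)`.

Conversely, let `x ≥ 0` have all chain sums at most `s`, let `A` be the set of maximal elements of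
the support of `x` and `t = min_A x`. A chain `c` avoiding `A` can be extended by an element of `A`
lying above all of `c ∩ supp x`, so its `x`-sum is at most `s - t`; a chain meeting `A` loses `t`
when `t ρ(A)` is subtracted. Hence `x - t ρ(A)` has all chain sums at most `s - t` and a smaller
support, and induction on the support gives `x ∈ s • conv {ρ(A)}`.
-/

open Set MeasureTheory Pointwise

def IsIdeal {d : ℕ} (P : PartialOrder (Fin d)) (I : Finset (Fin d)) : Prop :=
  ∀ i ∈ I, ∀ j, P.le j i → j ∈ I

def IsAC {d : ℕ} (P : PartialOrder (Fin d)) (A : Finset (Fin d)) : Prop :=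
  ∀ i ∈ A, ∀ j ∈ A, i ≠ j → ¬ P.le i j ∧ ¬ P.le j i

def rho {d : ℕ} (S : Finset (Fin d)) : Fin d → ℝ := fun i => if i ∈ S then 1 else 0

def IsLatticePt {d : ℕ} (x : Fin d → ℝ) : Prop := ∀ i, ∃ z : ℤ, x i = (z : ℝ)

def orderPolytope {d : ℕ} (P : PartialOrder (Fin d)) : Set (Fin d → ℝ) :=
  {x | (∀ i, 0 ≤ x i ∧ x i ≤ 1) ∧ ∀ i j : Fin d, P.le i j → x j ≤ x i}

def chainPolytope {d : ℕ} (P : PartialOrder (Fin d)) : Set (Fin d → ℝ) :=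
  {x | (∀ i, 0 ≤ x i) ∧
    ∀ c : Finset (Fin d), (∀ i ∈ c, ∀ j ∈ c, P.le i j ∨ P.le j i) →
      ∑ i ∈ c, x i ≤ 1}

def idealVerts {d : ℕ} (P : PartialOrder (Fin d)) : Set (Fin d → ℝ) :=
  {x | ∃ I : Finset (Fin d), IsIdeal P I ∧ x = rho I}

def acVerts {d : ℕ} (P : PartialOrder (Fin d)) : Set (Fin d → ℝ) :=
  {x | ∃ A : Finset (Fin d), IsAC P A ∧ x = rho A}

def GammaOO {d : ℕ} (P Q : PartialOrder (Fin d)) : Set (Fin d → ℝ) :=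
  convexHull ℝ (idealVerts P ∪ (fun v => -v) '' idealVerts Q)

def GammaOC {d : ℕ} (P Q : PartialOrder (Fin d)) : Set (Fin d → ℝ) :=
  convexHull ℝ (idealVerts P ∪ (fun v => -v) '' acVerts Q)

def GammaCC {d : ℕ} (P Q : PartialOrder (Fin d)) : Set (Fin d → ℝ) :=
  convexHull ℝ (acVerts P ∪ (fun v => -v) '' acVerts Q)

def IsLinExt {d : ℕ} (P : PartialOrder (Fin d)) (σ : Equiv.Perm (Fin d)) : Prop :=
  ∀ a b : Fin d, P.lt (σ a) (σ b) → a < b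

noncomputable def latCount {d : ℕ} (S : Set (Fin d → ℝ)) : ℕ :=
  Set.ncard {x ∈ S | IsLatticePt x}

def dil {d : ℕ} (n : ℕ) (S : Set (Fin d → ℝ)) : Set (Fin d → ℝ) := (n : ℝ) • S

def UnimodEquiv {d : ℕ} (S T : Set (Fin d → ℝ)) : Prop :=
  ∃ U : Matrix (Fin d) (Fin d) ℤ, IsUnit U.det ∧
    T = (fun v => (U.map (fun z : ℤ => (z : ℝ))).mulVec v) '' S

def IsLatticePolytope {d : ℕ} (S : Set (Fin d → ℝ)) : Prop :=
  ∃ V : Finset (Fin d → ℝ), (∀ v ∈ V, IsLatticePt v) ∧ S = convexHull ℝ ↑V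

def IsFanoPolytope {d : ℕ} (S : Set (Fin d → ℝ)) : Prop :=
  IsLatticePolytope S ∧ affineSpan ℝ S = ⊤ ∧ (0 : Fin d → ℝ) ∈ interior S ∧
    ∀ x ∈ interior S, IsLatticePt x → x = 0

def IsFacet {d : ℕ} (S F : Set (Fin d → ℝ)) : Prop :=
  IsExposed ℝ S F ∧ F.Nonempty ∧ F ≠ S ∧
    ∀ G : Set (Fin d → ℝ), IsExposed ℝ S G → G ≠ S → F ⊆ G → G = F

def IsZBasisSet {d : ℕ} (B : Set (Fin d → ℝ)) : Prop :=
  B.ncard = d ∧ (∀ x ∈ B, IsLatticePt x) ∧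
    ∀ y : Fin d → ℝ, y ∈ Submodule.span ℤ B ↔ IsLatticePt y

def IsSmoothFano {d : ℕ} (S : Set (Fin d → ℝ)) : Prop :=
  IsFanoPolytope S ∧ ∀ F, IsFacet S F → IsZBasisSet (Set.extremePoints ℝ F)

def IsSimplicialPolytope {d : ℕ} (S : Set (Fin d → ℝ)) : Prop :=
  ∀ F : Set (Fin d → ℝ), IsExposed ℝ S F → F ≠ S →
    ∃ V : Set (Fin d → ℝ), V.Finite ∧
      AffineIndependent ℝ ((↑) : V → (Fin d → ℝ)) ∧ F = convexHull ℝ V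

def seg {d : ℕ} (σ : Equiv.Perm (Fin d)) (k : Fin d) : Finset (Fin d) :=
  (Finset.Iic k).image σ

def unitVec (d : ℕ) (a : ℕ) : Fin d → ℝ := fun i => if (i : ℕ) = a then 1 else 0

def pairVec (d : ℕ) (a : ℕ) : Fin d → ℝ :=
  fun i => if (i : ℕ) = a ∨ (i : ℕ) = a + 1 then 1 else 0

def modelSplit (d k l m : ℕ) : Set (Fin d → ℝ) :=
  convexHull ℝ (
    {x | ∃ i : Fin d, x = unitVec d (i : ℕ) ∨ x = -unitVec d (i : ℕ)} ∪
    {x | ∃ i < k, x = pairVec d (2 * i) ∨ x = -pairVec d (2 * i)} ∪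
    {x | ∃ i < l, x = pairVec d (2 * k + 2 * i)} ∪
    {x | ∃ i < m, x = -pairVec d (2 * k + 2 * l + 2 * i)})

def chainOrd (d : ℕ) : PartialOrder (Fin d) := inferInstance

def vOrd (d : ℕ) : PartialOrder (Fin d) where
  le i j := i = j ∨ ((i : ℕ) < (j : ℕ) ∧ 2 ≤ (j : ℕ))
  lt i j := (i = j ∨ ((i : ℕ) < (j : ℕ) ∧ 2 ≤ (j : ℕ))) ∧
    ¬ (j = i ∨ ((j : ℕ) < (i : ℕ) ∧ 2 ≤ (i : ℕ)))
  lt_iff_le_not_ge i j := Iff.rfl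
  le_refl i := Or.inl rfl
  le_trans i j k hij hjk := by
    rcases hij with rfl | ⟨h1, h2⟩
    · exact hjk
    · rcases hjk with rfl | ⟨h3, h4⟩
      · exact Or.inr ⟨h1, h2⟩
      · exact Or.inr ⟨lt_trans h1 h3, h4⟩
  le_antisymm i j hij hji := by
    rcases hij with rfl | ⟨h1, h2⟩
    · rfl
    · rcases hji with h | ⟨h3, h4⟩
      · exact h.symm
      · exact absurd h3 (by omega)

section ChainPolytope

variable {d : ℕ}

def IsPChain (P : PartialOrder (Fin d)) (c : Finset (Fin d)) : Prop :=
  ∀ i ∈ c, ∀ j ∈ c, P.le i j ∨ P.le j i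

open Classical in
noncomputable def maximalElems (P : PartialOrder (Fin d)) (s : Finset (Fin d)) : Finset (Fin d) :=
  s.filter fun a => ∀ b ∈ s, P.le a b → b = a

noncomputable def supp (x : Fin d → ℝ) : Finset (Fin d) := {i | x i ≠ 0}

variable {P : PartialOrder (Fin d)}

lemma mem_supp {x : Fin d → ℝ} {i : Fin d} : i ∈ supp x ↔ x i ≠ 0 := by
  simp [supp]

lemma mem_maximalElems {s : Finset (Fin d)} {a : Fin d} :
    a ∈ maximalElems P s ↔ a ∈ s ∧ ∀ b ∈ s, P.le a b → b = a := by
  simp [maximalElems]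

lemma isPChain_singleton (i : Fin d) : IsPChain P {i} := by
  simp [IsPChain]

lemma IsPChain.mono {c c' : Finset (Fin d)} (hc : IsPChain P c) (h : c' ⊆ c) : IsPChain P c' :=
  fun i hi j hj => hc i (h hi) j (h hj)

lemma IsPChain.insert {c : Finset (Fin d)} {a : Fin d} (hc : IsPChain P c)
    (ha : ∀ j ∈ c, P.le j a) : IsPChain P (insert a c) := by
  intro i hi j hj
  rw [Finset.mem_insert] at hi hj
  rcases hi with rfl | hi <;> rcases hj with rfl | hj
  · exact Or.inl (P.le_refl _)
  · exact Or.inr (ha j hj)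
  · exact Or.inl (ha i hi)
  · exact hc i hi j hj

lemma IsAC.card_inter_le_one {A c : Finset (Fin d)} (hA : IsAC P A) (hc : IsPChain P c) :
    (c ∩ A).card ≤ 1 := by
  refine Finset.card_le_one.2 fun i hi j hj => ?_
  rw [Finset.mem_inter] at hi hj
  by_contra hne
  have hij := hA i hi.2 j hj.2 hne
  rcases hc i hi.1 j hj.1 with h | h
  exacts [hij.1 h, hij.2 h]

lemma isAC_maximalElems (s : Finset (Fin d)) : IsAC P (maximalElems P s) := by
  intro i hi j hj hne
  rw [mem_maximalElems] at hi hj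
  exact ⟨fun h => hne (hi.2 j hj.1 h).symm, fun h => hne (hj.2 i hi.1 h)⟩

lemma exists_mem_maximalElems_le {s : Finset (Fin d)} {m : Fin d} (hm : m ∈ s) :
    ∃ a ∈ maximalElems P s, P.le m a := by
  -- `Fin d` carries its own order instance, so the order `P` has to be passed explicitly.
  obtain ⟨a, hma, has, hmax⟩ := @Finset.exists_le_maximal _ P.toPreorder m s hm
  exact ⟨a, mem_maximalElems.2 ⟨has, fun b hb hab => P.le_antisymm _ _ (hmax hb hab) hab⟩,
    hma⟩

lemma exists_mem_maximalElems_forall_le {s c : Finset (Fin d)} (hc : IsPChain P c)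
    (hcs : c ⊆ s) (hs : s.Nonempty) : ∃ a ∈ maximalElems P s, ∀ j ∈ c, P.le j a := by
  obtain rfl | ⟨i, hi⟩ := c.eq_empty_or_nonempty
  · obtain ⟨a, ha, -⟩ := exists_mem_maximalElems_le (P := P) hs.choose_spec
    exact ⟨a, ha, by simp⟩
  · obtain ⟨m, -, hmc, hmax⟩ := @Finset.exists_le_maximal _ P.toPreorder i c hi
    obtain ⟨a, ha, hma⟩ := exists_mem_maximalElems_le (hcs hmc)
    exact ⟨a, ha, fun j hj => P.le_trans _ _ _ ((hc j hj m hmc).elim id (hmax hj)) hma⟩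

variable (P) in
lemma convex_chainPolytope : Convex ℝ (chainPolytope P) := by
  intro x hx y hy a b ha hb hab
  refine ⟨fun i => add_nonneg (mul_nonneg ha (hx.1 i)) (mul_nonneg hb (hy.1 i)), fun c hc => ?_⟩
  simp only [Pi.add_apply, Pi.smul_apply, smul_eq_mul, Finset.sum_add_distrib, ← Finset.mul_sum]
  calc a * ∑ i ∈ c, x i + b * ∑ i ∈ c, y i ≤ a * 1 + b * 1 := by
        gcongr
        exacts [hx.2 c hc, hy.2 c hc]
    _ = 1 := by rw [mul_one, mul_one, hab]

lemma le_one_of_mem_chainPolytope {x : Fin d → ℝ} (hx : x ∈ chainPolytope P) (i : Fin d) :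
    x i ≤ 1 := by
  simpa using hx.2 {i} (isPChain_singleton i)

lemma sum_rho (S c : Finset (Fin d)) : ∑ i ∈ c, rho S i = (c ∩ S).card := by
  simp [rho]

lemma rho_mem_chainPolytope {A : Finset (Fin d)} (hA : IsAC P A) : rho A ∈ chainPolytope P := by
  refine ⟨fun i => by unfold rho; split_ifs <;> norm_num, fun c hc => ?_⟩
  rw [sum_rho]
  exact_mod_cast hA.card_inter_le_one hc

lemma sum_le_sub_of_disjoint_maximalElems {x : Fin d → ℝ} {s t : ℝ}
    (hxs : ∀ c, IsPChain P c → ∑ i ∈ c, x i ≤ s) (hx : (supp x).Nonempty)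
    (ht : ∀ a ∈ maximalElems P (supp x), t ≤ x a) {c : Finset (Fin d)} (hc : IsPChain P c)
    (hdisj : Disjoint c (maximalElems P (supp x))) : ∑ i ∈ c, x i ≤ s - t := by
  have hc' : IsPChain P {i ∈ c | x i ≠ 0} := hc.mono (Finset.filter_subset _ _)
  obtain ⟨a, ha, hle⟩ := exists_mem_maximalElems_forall_le hc'
    (fun i hi => mem_supp.2 (Finset.mem_filter.1 hi).2) hx
  have hac : a ∉ {i ∈ c | x i ≠ 0} :=
    fun h => Finset.disjoint_right.1 hdisj ha (Finset.mem_of_mem_filter _ h)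
  have hsum := hxs _ (hc'.insert hle)
  rw [Finset.sum_insert hac, Finset.sum_filter_ne_zero] at hsum
  linarith [ht a ha]

lemma sum_sub_smul_rho_maximalElems_le {x : Fin d → ℝ} {s t : ℝ}
    (hxs : ∀ c, IsPChain P c → ∑ i ∈ c, x i ≤ s) (hx : (supp x).Nonempty)
    (ht : ∀ a ∈ maximalElems P (supp x), t ≤ x a) {c : Finset (Fin d)} (hc : IsPChain P c) :
    ∑ i ∈ c, (x - t • rho (maximalElems P (supp x))) i ≤ s - t := by
  simp only [Pi.sub_apply, Pi.smul_apply, smul_eq_mul, Finset.sum_sub_distrib, ← Finset.mul_sum,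
    sum_rho]
  rcases Nat.le_one_iff_eq_zero_or_eq_one.1 ((isAC_maximalElems _).card_inter_le_one hc)
    with h | h
  · have hdisj : Disjoint c (maximalElems P (supp x)) :=
      Finset.disjoint_iff_inter_eq_empty.2 (Finset.card_eq_zero.1 h)
    rw [h, Nat.cast_zero, mul_zero, sub_zero]
    exact sum_le_sub_of_disjoint_maximalElems hxs hx ht hc hdisj
  · rw [h, Nat.cast_one, mul_one]
    linarith [hxs c hc]

lemma sub_smul_rho_nonneg {x : Fin d → ℝ} {A : Finset (Fin d)} {t : ℝ} (hx : ∀ i, 0 ≤ x i)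
    (ht : ∀ a ∈ A, t ≤ x a) (i : Fin d) : 0 ≤ (x - t • rho A) i := by
  by_cases hi : i ∈ A
  · simpa [rho, hi] using ht i hi
  · simpa [rho, hi] using hx i

lemma supp_sub_smul_rho_ssubset {x : Fin d → ℝ} {A : Finset (Fin d)} {i₀ : Fin d}
    (hA : A ⊆ supp x) (hi₀ : i₀ ∈ A) : supp (x - x i₀ • rho A) ⊂ supp x := by
  refine (Finset.ssubset_iff_of_subset fun i hi => ?_).2
    ⟨i₀, hA hi₀, by simp [mem_supp, rho, hi₀]⟩
  by_contra hxi
  have hiA : i ∉ A := fun h => hxi (hA h)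
  rw [mem_supp, not_not] at hxi
  simp [mem_supp, rho, hiA, hxi] at hi

lemma mem_smul_convexHull_acVerts {x : Fin d → ℝ} {s : ℝ} (hx : ∀ i, 0 ≤ x i)
    (hxs : ∀ c, IsPChain P c → ∑ i ∈ c, x i ≤ s) :
    x ∈ s • convexHull ℝ (acVerts P) := by
  induction hS : supp x using Finset.strongInduction generalizing x s with
  | H S ih =>
  subst hS
  have hrho {A : Finset (Fin d)} (hA : IsAC P A) : rho A ∈ convexHull ℝ (acVerts P) :=
    subset_convexHull ℝ _ ⟨A, hA, rfl⟩
  obtain hS | hS := (supp x).eq_empty_or_nonempty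
  · have hx0 : x = 0 :=
      funext fun i => by simpa [mem_supp] using Finset.eq_empty_iff_forall_notMem.1 hS i
    have h0 : rho (∅ : Finset (Fin d)) = 0 := funext fun i => by simp [rho]
    exact hx0 ▸ Set.zero_mem_smul_set (h0 ▸ hrho (by simp [IsAC]))
  set A := maximalElems P (supp x)
  obtain ⟨m, hm⟩ := hS
  obtain ⟨a, ha, -⟩ := exists_mem_maximalElems_le (P := P) hm
  obtain ⟨i₀, hi₀, hmin⟩ := A.exists_min_image x ⟨a, ha⟩
  have hAS : A ⊆ supp x := fun _ h => (mem_maximalElems.1 h).1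
  have ht0 : 0 ≤ x i₀ := hx i₀
  have hts : x i₀ ≤ s := by simpa using hxs {i₀} (isPChain_singleton i₀)
  have hrest : x - x i₀ • rho A ∈ (s - x i₀) • convexHull ℝ (acVerts P) :=
    ih _ (supp_sub_smul_rho_ssubset hAS hi₀) (sub_smul_rho_nonneg hx hmin)
      (fun c hc => sum_sub_smul_rho_maximalElems_le hxs ⟨m, hm⟩ hmin hc) rfl
  have hx_split : x = x i₀ • rho A + (x - x i₀ • rho A) := (add_sub_cancel _ _).symm
  have hs_split : s = x i₀ + (s - x i₀) := (add_sub_cancel _ _).symm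
  rw [hx_split, hs_split, (convex_convexHull ℝ _).add_smul ht0 (sub_nonneg.2 hts)]
  exact Set.add_mem_add (Set.smul_mem_smul_set (hrho (isAC_maximalElems _))) hrest

lemma chainPolytope_subset_convexHull : chainPolytope P ⊆ convexHull ℝ (acVerts P) :=
  fun _ hx => by simpa using mem_smul_convexHull_acVerts hx.1 hx.2

variable (P) in
lemma chainPolytope_eq_convexHull : chainPolytope P = convexHull ℝ (acVerts P) :=
  chainPolytope_subset_convexHull.antisymm <| convexHull_min
    (by rintro _ ⟨A, hA, rfl⟩; exact rho_mem_chainPolytope hA) (convex_chainPolytope P)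

lemma chainPolytope_subset_pi_Icc : chainPolytope P ⊆ univ.pi fun _ => Icc 0 1 :=
  fun _ hx i _ => ⟨hx.1 i, le_one_of_mem_chainPolytope hx i⟩

lemma rho_mem_extremePoints_pi_Icc (S : Finset (Fin d)) :
    rho S ∈ extremePoints ℝ (univ.pi fun _ : Fin d => Icc (0 : ℝ) 1) := by
  simp only [extremePoints_pi, extremePoints_Icc zero_le_one, mem_univ_pi, rho]
  intro i
  split_ifs <;> simp

variable (P) in
lemma extremePoints_chainPolytope : extremePoints ℝ (chainPolytope P) = acVerts P := by
  refine Subset.antisymm ?_ ?_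
  · rw [chainPolytope_eq_convexHull]
    exact extremePoints_convexHull_subset
  · rintro _ ⟨A, hA, rfl⟩
    exact inter_extremePoints_subset_extremePoints_of_subset chainPolytope_subset_pi_Icc
      ⟨rho_mem_chainPolytope hA, rho_mem_extremePoints_pi_Icc A⟩

variable (P) in
lemma affineSpan_chainPolytope : affineSpan ℝ (chainPolytope P) = ⊤ := by
  have h0 : (0 : Fin d → ℝ) ∈ chainPolytope P := ⟨fun _ => le_rfl, fun c _ => by simp⟩
  rw [AffineSubspace.affineSpan_eq_top_iff_vectorSpan_eq_top_of_nonempty ℝ _ _ ⟨0, h0⟩,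
    eq_top_iff, ← (Pi.basisFun ℝ (Fin d)).span_eq, Submodule.span_le]
  rintro _ ⟨i, rfl⟩
  have hi : Pi.basisFun ℝ (Fin d) i = rho {i} -ᵥ 0 := by
    ext j
    simp [rho, Pi.single_apply]
  rw [hi]
  exact vsub_mem_vectorSpan ℝ (rho_mem_chainPolytope (by simp [IsAC])) h0

end ChainPolytope

theorem statement1 {d : ℕ} (P : PartialOrder (Fin d)) :
    Convex ℝ (chainPolytope P) ∧
    chainPolytope P = convexHull ℝ (acVerts P) ∧
    affineSpan ℝ (chainPolytope P) = ⊤ ∧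
    Set.extremePoints ℝ (chainPolytope P) = acVerts P := by
  exact ⟨convex_chainPolytope P, chainPolytope_eq_convexHull P, affineSpan_chainPolytope P,
    extremePoints_chainPolytope P⟩
end

section
/- For any finite poset P with d elements, the order polytope O(P) and the chain polytope C(P) have the same Ehrhart polynomial: for every positive integer n, |nO(P) ∩ ℤ^d| = |nC(P) ∩ ℤ^d|. -/
open Set MeasureTheory Pointwise

/-!
Stanley's transfer map `φ x a = x a - max {x b | a < b}` (with `max ∅ = 0`) turns the
order-reversing maps `x : P → [0, t]` into the nonnegative `y` whose sum along every chain is at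
most `t`: along a chain `a₁ < ⋯ < aₖ` the values `φ x aᵢ ≤ x aᵢ - x aᵢ₊₁` telescope. Its inverse
`ψ y a = y a + max {ψ y b | a < b}` is the largest chain sum of `y` starting at `a`. Both maps
involve only sums and differences of coordinates, so `φ` is a bijection from the lattice points
of `t • O(P)` to those of `t • C(P)`.
-/

open Finset

lemma IsChain.isLeast_of_minimal {α : Type*} [PartialOrder α] {s : Set α}
    (hs : IsChain (· ≤ ·) s) {m : α} (hm : Minimal (· ∈ s) m) : IsLeast s m :=
  ⟨hm.1, fun _ hb => (hs.total hm.1 hb).elim id fun h => (hm.eq_of_le hb h).ge⟩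

section Transfer

variable {α : Type*} [PartialOrder α] [Fintype α]

open scoped Classical

/-- The `0` stands for the value at an adjoined top element: `maxAbove x a` is the maximum of
`0` and of the `x b` with `a < b`. -/
noncomputable def maxAbove (x : α → ℝ) (a : α) : ℝ :=
  (insert 0 ((univ.filter (a < ·)).image x)).max' (insert_nonempty _ _)

lemma maxAbove_nonneg (x : α → ℝ) (a : α) : 0 ≤ maxAbove x a :=
  le_max' _ _ (mem_insert_self _ _)

lemma le_maxAbove (x : α → ℝ) {a b : α} (h : a < b) : x b ≤ maxAbove x a :=
  le_max' _ _ (mem_insert_of_mem (mem_image_of_mem x (mem_filter.2 ⟨mem_univ b, h⟩)))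

lemma maxAbove_le {x : α → ℝ} {a : α} {t : ℝ} (h0 : 0 ≤ t) (h : ∀ b, a < b → x b ≤ t) :
    maxAbove x a ≤ t :=
  max'_le _ _ _ (by simpa [h0] using h)

lemma maxAbove_eq_zero_or (x : α → ℝ) (a : α) :
    maxAbove x a = 0 ∨ ∃ b, a < b ∧ maxAbove x a = x b := by
  have hmem := max'_mem _ (insert_nonempty 0 ((univ.filter (a < ·)).image x))
  simp only [Finset.mem_insert, Finset.mem_image, Finset.mem_filter, Finset.mem_univ,
    true_and] at hmem
  rcases hmem with h | ⟨b, hab, h⟩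
  exacts [Or.inl h, Or.inr ⟨b, hab, h.symm⟩]

lemma maxAbove_congr {x y : α → ℝ} {a : α} (h : ∀ b, a < b → x b = y b) :
    maxAbove x a = maxAbove y a := by
  unfold maxAbove
  congr 2
  exact image_congr fun b hb => h b (mem_filter.1 hb).2

noncomputable def transfer (x : α → ℝ) (a : α) : ℝ := x a - maxAbove x a

noncomputable def transferInv (y : α → ℝ) : α → ℝ :=
  wellFounded_gt.fix fun a rec => y a + maxAbove (fun b => if h : a < b then rec b h else 0) a

lemma transferInv_eq (y : α → ℝ) (a : α) :
    transferInv y a = y a + maxAbove (transferInv y) a := by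
  rw [transferInv, wellFounded_gt.fix_eq]
  exact congrArg (y a + ·) (maxAbove_congr fun b h => dif_pos h)

lemma transfer_transferInv (y : α → ℝ) : transfer (transferInv y) = y := by
  funext a
  rw [transfer, transferInv_eq y a, add_sub_cancel_right]

lemma transferInv_transfer (x : α → ℝ) : transferInv (transfer x) = x := by
  funext a
  induction a using WellFoundedGT.induction with
  | _ a ih => rw [transferInv_eq, maxAbove_congr ih, transfer, sub_add_cancel]

noncomputable def transferEquiv : (α → ℝ) ≃ (α → ℝ) where
  toFun := transfer
  invFun := transferInv
  left_inv := transferInv_transfer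
  right_inv := transfer_transferInv

lemma transfer_nonneg {x : α → ℝ} (hx0 : ∀ a, 0 ≤ x a) (hx : Antitone x) (a : α) :
    0 ≤ transfer x a :=
  sub_nonneg.2 (maxAbove_le (hx0 a) fun _ h => hx h.le)

lemma sum_transfer_le {x : α → ℝ} {t : ℝ} (ht : 0 ≤ t) {c : Finset α}
    (hc : IsChain (· ≤ ·) (c : Set α)) (hx : ∀ a ∈ c, x a ≤ t) :
    ∑ a ∈ c, transfer x a ≤ t := by
  induction c using Finset.strongInduction generalizing t with
  | H c ih =>
  obtain rfl | hne := c.eq_empty_or_nonempty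
  · simpa using ht
  obtain ⟨m, hm⟩ := Finset.exists_minimal hne
  have hlt : ∀ b ∈ c.erase m, m < b := fun b hb =>
    ((hc.isLeast_of_minimal hm).2 (mem_of_mem_erase hb)).lt_of_ne (ne_of_mem_erase hb).symm
  have hrest : ∑ a ∈ c.erase m, transfer x a ≤ maxAbove x m :=
    ih _ (erase_ssubset hm.1) (maxAbove_nonneg x m) (hc.mono (coe_subset.2 (erase_subset _ _)))
      fun b hb => le_maxAbove x (hlt b hb)
  calc ∑ a ∈ c, transfer x a = transfer x m + ∑ a ∈ c.erase m, transfer x a :=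
        (add_sum_erase _ _ hm.1).symm
    _ ≤ x m := by rw [transfer]; linarith
    _ ≤ t := hx m hm.1

lemma exists_isChain_sum_eq_transferInv (y : α → ℝ) (a : α) :
    ∃ c : Finset α, IsChain (· ≤ ·) (c : Set α) ∧ a ∈ lowerBounds (c : Set α) ∧
      ∑ b ∈ c, y b = transferInv y a := by
  induction a using WellFoundedGT.induction with
  | _ a ih =>
  rcases maxAbove_eq_zero_or (transferInv y) a with h | ⟨b, hab, h⟩
  · refine ⟨{a}, by simp, by simp, ?_⟩
    rw [transferInv_eq, h, sum_singleton, add_zero]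
  · obtain ⟨c, hc, hbc, hsum⟩ := ih b hab
    have hac : a ∈ lowerBounds (c : Set α) := fun d hd => hab.le.trans (hbc hd)
    have ha : a ∉ c := fun ha => (hab.trans_le (hbc ha)).false
    refine ⟨insert a c, ?_, ?_, ?_⟩
    · rw [coe_insert]
      exact hc.insert fun d hd _ => Or.inl (hac hd)
    · rw [coe_insert, lowerBounds_insert]
      exact ⟨le_rfl, hac⟩
    · rw [sum_insert ha, hsum, transferInv_eq y a, h]

lemma transferInv_le {y : α → ℝ} {t : ℝ}
    (hy : ∀ c : Finset α, IsChain (· ≤ ·) (c : Set α) → ∑ a ∈ c, y a ≤ t) (a : α) :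
    transferInv y a ≤ t := by
  obtain ⟨c, hc, -, hsum⟩ := exists_isChain_sum_eq_transferInv y a
  exact hsum ▸ hy c hc

lemma transferInv_nonneg {y : α → ℝ} (hy : ∀ a, 0 ≤ y a) (a : α) : 0 ≤ transferInv y a := by
  rw [transferInv_eq]
  exact add_nonneg (hy a) (maxAbove_nonneg _ _)

lemma transferInv_antitone {y : α → ℝ} (hy : ∀ a, 0 ≤ y a) : Antitone (transferInv y) := by
  intro a b hab
  obtain rfl | hlt := hab.eq_or_lt
  · rfl
  rw [transferInv_eq y a]
  linarith [hy a, le_maxAbove (transferInv y) hlt]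

lemma transfer_mem {G : AddSubgroup ℝ} {x : α → ℝ} (hx : ∀ a, x a ∈ G) (a : α) :
    transfer x a ∈ G := by
  rcases maxAbove_eq_zero_or x a with h | ⟨b, -, h⟩
  · simpa [transfer, h] using hx a
  · rw [transfer, h]
    exact G.sub_mem (hx a) (hx b)

lemma transferInv_mem {G : AddSubgroup ℝ} {y : α → ℝ} (hy : ∀ a, y a ∈ G) (a : α) :
    transferInv y a ∈ G := by
  obtain ⟨c, -, -, hsum⟩ := exists_isChain_sum_eq_transferInv y a
  exact hsum ▸ G.sum_mem fun b _ => hy b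

end Transfer

lemma isLatticePt_iff {d : ℕ} {x : Fin d → ℝ} :
    IsLatticePt x ↔ ∀ i, x i ∈ (Int.castAddHom ℝ).range := by
  simp only [IsLatticePt, AddMonoidHom.mem_range, Int.coe_castAddHom, eq_comm]

lemma mem_smul_orderPolytope {d : ℕ} {P : PartialOrder (Fin d)} {t : ℝ} (ht : 0 < t)
    {x : Fin d → ℝ} :
    x ∈ t • orderPolytope P ↔
      (∀ i, 0 ≤ x i ∧ x i ≤ t) ∧ ∀ i j, P.le i j → x j ≤ x i := by
  rw [mem_smul_set_iff_inv_smul_mem₀ ht.ne']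
  simp [orderPolytope, inv_mul_le_iff₀ ht, mul_inv_cancel_left₀ ht.ne', ht]

lemma mem_smul_chainPolytope {d : ℕ} {P : PartialOrder (Fin d)} {t : ℝ} (ht : 0 < t)
    {x : Fin d → ℝ} :
    x ∈ t • chainPolytope P ↔
      (∀ i, 0 ≤ x i) ∧ ∀ c : Finset (Fin d), (∀ i ∈ c, ∀ j ∈ c, P.le i j ∨ P.le j i) →
        ∑ i ∈ c, x i ≤ t := by
  rw [mem_smul_set_iff_inv_smul_mem₀ ht.ne']
  simp [chainPolytope, ← Finset.mul_sum, inv_mul_le_iff₀ ht, ht]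

theorem statement2 {d : ℕ} (P : PartialOrder (Fin d)) :
    ∀ n : ℕ, 0 < n →
      latCount (dil n (orderPolytope P)) = latCount (dil n (chainPolytope P)) := by
  intro n hn
  let _ := P
  have ht : (0 : ℝ) < n := Nat.cast_pos.2 hn
  have hbij : Set.BijOn transferEquiv {x ∈ dil n (orderPolytope P) | IsLatticePt x}
      {y ∈ dil n (chainPolytope P) | IsLatticePt y} := by
    refine transferEquiv.bijOn' ?_ ?_
    · rintro x ⟨hx, hxZ⟩
      obtain ⟨hxt, hanti⟩ := (mem_smul_orderPolytope ht).1 hx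
      refine ⟨(mem_smul_chainPolytope ht).2 ⟨transfer_nonneg (fun i => (hxt i).1) hanti,
        fun c hc => sum_transfer_le ht.le (fun i hi j hj _ => hc i hi j hj) fun i _ => (hxt i).2⟩,
        isLatticePt_iff.2 (transfer_mem (isLatticePt_iff.1 hxZ))⟩
    · rintro y ⟨hy, hyZ⟩
      obtain ⟨hy0, hchain⟩ := (mem_smul_chainPolytope ht).1 hy
      refine ⟨(mem_smul_orderPolytope ht).2 ⟨fun i => ⟨transferInv_nonneg hy0 i,
        transferInv_le (fun c hc => hchain c fun i hi j hj => hc.total hi hj) i⟩,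
        fun _ _ hij => transferInv_antitone hy0 hij⟩,
        isLatticePt_iff.2 (transferInv_mem (isLatticePt_iff.1 hyZ))⟩
  rw [latCount, latCount, ← hbij.image_eq, Set.ncard_image_of_injective _ transferEquiv.injective]
end

section
/- For any finite poset P with d elements, the Euclidean volume of the order polytope O(P) equals e(P)/d!, where e(P) is the number of linear extensions of P. -/
open Set MeasureTheory Pointwise

/-!
The simplices `{x | 1 ≥ x (σ 0) ≥ x (σ 1) ≥ ⋯ ≥ 0}`, one for each permutation `σ`, are carried
onto each other by measure-preserving permutations of the coordinates, overlap only in the null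
set of points with two equal coordinates, and cover the unit cube; so each has volume `1 / d!`.
Away from that null set, a point of `O(P)` lies in exactly one simplex, and the `σ` of that
simplex is a linear extension of `P`; conversely the simplex of a linear extension lies in
`O(P)`. Hence `O(P)` is, up to a null set, the disjoint union of `e(P)` such simplices.
-/

open Function Equiv

section

variable {ι : Type*} [Fintype ι]

lemma volume_setOf_apply_eq_apply {i j : ι} (hij : i ≠ j) :
    volume {x : ι → ℝ | x i = x j} = 0 := by
  classical
  let φ : (ι → ℝ) →ₗ[ℝ] ℝ := (LinearMap.proj i : (ι → ℝ) →ₗ[ℝ] ℝ) - LinearMap.proj j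
  have hker : {x : ι → ℝ | x i = x j} = (LinearMap.ker φ : Set (ι → ℝ)) := by
    ext x
    simp [φ, sub_eq_zero]
  rw [hker]
  refine Measure.addHaar_submodule _ _ fun htop => ?_
  have hsingle : (Pi.single i 1 : ι → ℝ) ∈ LinearMap.ker φ := htop ▸ Submodule.mem_top
  simp [φ, hij.symm] at hsingle

lemma volume_setOf_not_injective : volume {x : ι → ℝ | ¬ Injective x} = 0 := by
  refine measure_mono_null (t := ⋃ (i) (j) (_ : i ≠ j), {x : ι → ℝ | x i = x j}) ?_ ?_
  · intro x hx
    simp only [Injective, not_forall] at hx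
    obtain ⟨i, j, hxij, hij⟩ := hx
    exact mem_iUnion₂.mpr ⟨i, j, mem_iUnion.mpr ⟨hij, hxij⟩⟩
  · exact measure_iUnion_null fun i => measure_iUnion_null fun j =>
      measure_iUnion_null fun hij => volume_setOf_apply_eq_apply hij

end

lemma exists_antitone_comp_perm {α : Type*} [LinearOrder α] {d : ℕ} (x : Fin d → α) :
    ∃ σ : Perm (Fin d), Antitone (x ∘ σ) :=
  ⟨Tuple.sort (OrderDual.toDual ∘ x), monotone_toDual_comp_iff.mp (Tuple.monotone_sort _)⟩

section Simplex

variable {d : ℕ}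

def simplex (σ : Perm (Fin d)) : Set (Fin d → ℝ) :=
  {x | x ∈ Icc 0 1 ∧ Antitone (x ∘ σ)}

lemma isClosed_simplex (σ : Perm (Fin d)) : IsClosed (simplex σ) := by
  have hsimplex : simplex σ =
      Icc 0 1 ∩ ⋂ (a) (b) (_ : a ≤ b), {x : Fin d → ℝ | x (σ b) ≤ x (σ a)} := by
    ext x
    simp [simplex, Antitone]
  rw [hsimplex]
  exact isClosed_Icc.inter <| isClosed_iInter fun a => isClosed_iInter fun b =>
    isClosed_iInter fun _ => isClosed_le (continuous_apply _) (continuous_apply _)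

lemma volume_simplex_eq_volume_simplex_one (σ : Perm (Fin d)) :
    volume (simplex σ) = volume (simplex (1 : Perm (Fin d))) := by
  let e := MeasurableEquiv.piCongrLeft (fun _ : Fin d => ℝ) σ.symm
  have he : ∀ x, e x = x ∘ σ := fun x => funext fun j => by
    simpa [e, MeasurableEquiv.coe_piCongrLeft] using
      Equiv.piCongrLeft_apply_apply (fun _ : Fin d => ℝ) σ.symm x (σ j)
  have hpre : e ⁻¹' simplex 1 = simplex σ := by
    ext x
    simp only [mem_preimage, he, simplex, mem_ofPred_eq, Perm.coe_one, comp_id, mem_Icc, Pi.le_def,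
      comp_apply, Pi.zero_apply, Pi.one_apply, σ.forall_congr_right (q := fun i => 0 ≤ x i),
      σ.forall_congr_right (q := fun i => x i ≤ 1)]
  rw [← hpre]
  exact (volume_measurePreserving_piCongrLeft _ σ.symm).measure_preimage
    (isClosed_simplex 1).measurableSet.nullMeasurableSet

lemma eq_of_mem_simplex_of_injective {σ τ : Perm (Fin d)} {x : Fin d → ℝ} (hx : Injective x)
    (hσ : x ∈ simplex σ) (hτ : x ∈ simplex τ) : σ = τ :=
  Equiv.ext fun a => hx (congrFun (Tuple.unique_antitone hσ.2 hτ.2) a)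

lemma aedisjoint_simplex {σ τ : Perm (Fin d)} (h : σ ≠ τ) :
    AEDisjoint volume (simplex σ) (simplex τ) :=
  measure_mono_null (fun _ hx hinj => h (eq_of_mem_simplex_of_injective hinj hx.1 hx.2))
    volume_setOf_not_injective

lemma volume_biUnion_simplex (s : Set (Perm (Fin d))) :
    volume (⋃ σ ∈ s, simplex σ) = Nat.card s * volume (simplex (1 : Perm (Fin d))) := by
  classical
  rw [biUnion_eq_iUnion,
    measure_iUnion₀ (fun σ τ h => aedisjoint_simplex (Subtype.coe_ne_coe.mpr h))
      (fun σ => (isClosed_simplex σ.1).measurableSet.nullMeasurableSet), tsum_fintype]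
  simp [volume_simplex_eq_volume_simplex_one, Nat.card_eq_fintype_card]

lemma iUnion_simplex : ⋃ σ : Perm (Fin d), simplex σ = Icc 0 1 :=
  subset_antisymm (iUnion_subset fun _ _ hx => hx.1) fun x hx =>
    let ⟨σ, hσ⟩ := exists_antitone_comp_perm x
    mem_iUnion.mpr ⟨σ, hx, hσ⟩

lemma volume_simplex_one : volume (simplex (1 : Perm (Fin d))) = (d.factorial : ENNReal)⁻¹ := by
  have h := volume_biUnion_simplex (univ : Set (Perm (Fin d)))
  rw [biUnion_univ, iUnion_simplex, Real.volume_Icc_pi] at h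
  simp only [Nat.card_univ, Nat.card_perm, Nat.card_fin, Pi.one_apply, Pi.zero_apply, sub_zero,
    ENNReal.ofReal_one, Finset.prod_const_one] at h
  exact ENNReal.eq_inv_of_mul_eq_one_left (by rw [mul_comm]; exact h.symm)

end Simplex

section OrderPolytope

variable {d : ℕ} (P : PartialOrder (Fin d))

lemma simplex_subset_orderPolytope {σ : Perm (Fin d)} (hσ : IsLinExt P σ) :
    simplex σ ⊆ orderPolytope P := by
  rintro x ⟨hcube, hanti⟩
  refine ⟨fun i => ⟨hcube.1 i, hcube.2 i⟩, fun i j hij => ?_⟩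
  rcases eq_or_ne i j with rfl | hne
  · exact le_rfl
  · have hlt : P.lt (σ (σ.symm i)) (σ (σ.symm j)) := by
      simpa only [apply_symm_apply, P.lt_iff_le_not_ge] using
        ⟨hij, fun hji => hne (P.le_antisymm i j hij hji)⟩
    simpa using hanti (Fin.le_of_lt (hσ _ _ hlt))

lemma isLinExt_of_mem_orderPolytope_of_mem_simplex {x : Fin d → ℝ} (hx : x ∈ orderPolytope P)
    (hinj : Injective x) {σ : Perm (Fin d)} (hσ : x ∈ simplex σ) : IsLinExt P σ := by
  intro a b hab
  obtain ⟨hle, hnge⟩ := (P.lt_iff_le_not_ge _ _).mp hab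
  by_contra! hba
  rw [hinj (le_antisymm (hσ.2 hba) (hx.2 _ _ hle))] at hnge
  exact hnge (P.le_refl _)

lemma orderPolytope_subset_biUnion_simplex_union :
    orderPolytope P ⊆ (⋃ σ ∈ {σ | IsLinExt P σ}, simplex σ) ∪ {x | ¬ Injective x} := by
  intro x hx
  by_cases hinj : Injective x
  · obtain ⟨σ, hσ⟩ := exists_antitone_comp_perm x
    have hσx : x ∈ simplex σ := ⟨⟨fun i => (hx.1 i).1, fun i => (hx.1 i).2⟩, hσ⟩
    exact Or.inl <| mem_biUnion (isLinExt_of_mem_orderPolytope_of_mem_simplex P hx hinj hσx) hσx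
  · exact Or.inr hinj

lemma volume_orderPolytope_eq_volume_biUnion_simplex :
    volume (orderPolytope P) = volume (⋃ σ ∈ {σ | IsLinExt P σ}, simplex σ) :=
  have hnull := measure_mono_null
    (sdiff_subset_iff.mpr (orderPolytope_subset_biUnion_simplex_union P)) volume_setOf_not_injective
  (measure_mono_ae (ae_le_set.mpr hnull)).antisymm
    (measure_mono (iUnion₂_subset fun _ hσ => simplex_subset_orderPolytope P hσ))

end OrderPolytope

theorem statement3 {d : ℕ} (P : PartialOrder (Fin d)) :
    volume (orderPolytope P) =
      (Nat.card {σ : Equiv.Perm (Fin d) // IsLinExt P σ} : ENNReal) /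
        (Nat.factorial d : ENNReal) := by
  rw [volume_orderPolytope_eq_volume_biUnion_simplex, volume_biUnion_simplex, volume_simplex_one,
    div_eq_mul_inv]
  rfl
end

section
/- Let P and Q be finite posets with |P| = |Q| = d. The origin is an interior point of the polytope Γ(O(P), −O(Q)) = conv({ρ(I) : I ∈ J(P)} ∪ {−ρ(J) : J ∈ J(Q)}) if and only if P and Q possess a common linear extension. -/
open Set MeasureTheory Pointwise

/-!
If `σ` is a common linear extension, its initial segments are ideals of both `P` and `Q`; their
indicator vectors span `ℝ^d`, so together with their negatives they span a centrally symmetric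
polytope inside `Γ` which contains `0` in its interior.

Conversely, if there is no common linear extension, the union of the strict orders of `P` and `Q`
has a cycle, and the cycle has a `Q`-step `x < y`. Summing `e_u - e_v` over the `Q`-steps `u < v`
of the cycle gives a functional `f` that is `≥ 0` on `ρ(J)` for `J ∈ J(Q)`; since the sum over all
steps telescopes to `0` and every `P`-step contributes `≥ 0` on `ρ(I)`, `f ≤ 0` on `ρ(I)` for
`I ∈ J(P)`. So `Γ` lies in the half-space `f ≤ 0`, while `f` is positive on the indicator of the
principal `Q`-ideal of `x`: `0` is a boundary point of `Γ`.
-/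

open Relation

theorem Fintype.exists_equiv_fin_strictMono_of_isStrictOrder {α : Type*} [Fintype α] {n : ℕ}
    (hn : Fintype.card α = n) (r : α → α → Prop) [IsStrictOrder α r] :
    ∃ e : Fin n ≃ α, ∀ a b, r (e a) (e b) → a < b := by
  let _ : PartialOrder α := partialOrderOfSO r
  let _ : Fintype (LinearExtension α) := inferInstanceAs (Fintype α)
  let e := monoEquivOfFin (LinearExtension α) hn
  refine ⟨e.toEquiv, fun a b hab => e.lt_iff_lt.mp ?_⟩
  have hle : toLinearExtension (α := α) (e a) ≤ toLinearExtension (α := α) (e b) :=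
    toLinearExtension.monotone (Or.inr hab)
  exact lt_of_le_of_ne hle fun h => irrefl_of r (e b) (h ▸ hab)

theorem zero_mem_interior_convexHull_of_neg_subset {E : Type*} [NormedAddCommGroup E]
    [NormedSpace ℝ E] [FiniteDimensional ℝ E] {s : Set E} (h0 : 0 ∈ s) (hneg : -s ⊆ s)
    (hspan : Submodule.span ℝ s = ⊤) : (0 : E) ∈ interior (convexHull ℝ s) := by
  obtain ⟨x, hx⟩ : (interior (convexHull ℝ s)).Nonempty := by
    rw [(convex_convexHull ℝ s).interior_nonempty_iff_affineSpan_eq_top, affineSpan_convexHull,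
      ← Set.insert_eq_of_mem h0, ← SetLike.coe_set_eq, affineSpan_insert_zero, hspan]
    rfl
  have hnx : -x ∈ interior (convexHull ℝ s) := by
    have hsymm : -convexHull ℝ s ⊆ convexHull ℝ s := by
      rw [← convexHull_neg]
      exact convexHull_mono hneg
    refine interior_mono hsymm ?_
    change -x ∈ interior (Homeomorph.neg E ⁻¹' convexHull ℝ s)
    rw [← (Homeomorph.neg E).preimage_interior]
    simpa using hx
  simpa using (convex_convexHull ℝ s).interior hx hnx (by norm_num : (0 : ℝ) ≤ 1 / 2)
    (by norm_num : (0 : ℝ) ≤ 1 / 2) (by norm_num)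

theorem zero_notMem_interior_of_subset_dotProduct_nonpos {ι : Type*} [Fintype ι]
    {C : Set (ι → ℝ)} {f u : ι → ℝ} (hu : 0 < f ⬝ᵥ u) (hC : C ⊆ {x | f ⬝ᵥ x ≤ 0}) :
    0 ∉ interior C := by
  intro h0
  have hlim : Filter.Tendsto (fun t : ℝ => t • u) (nhdsWithin 0 (Set.Ioi 0)) (nhds 0) := by
    simpa using
      (tendsto_nhdsWithin_of_tendsto_nhds (Filter.tendsto_id (x := nhds (0 : ℝ)))).smul_const u
  obtain ⟨t, htC, ht⟩ :=
    ((hlim.eventually (mem_interior_iff_mem_nhds.mp h0)).and self_mem_nhdsWithin).exists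
  have htu : f ⬝ᵥ (t • u) ≤ 0 := hC htC
  rw [dotProduct_smul, smul_eq_mul] at htu
  nlinarith [mul_pos (Set.mem_Ioi.mp ht) hu]

def ltUnion {α : Type*} (P Q : PartialOrder α) (x y : α) : Prop := P.lt x y ∨ Q.lt x y

section Cycles

variable {α : Type*} {P Q : PartialOrder α}

theorem lt_or_exists_lt_of_transGen_ltUnion {a b : α} (h : TransGen (ltUnion P Q) a b) :
    P.lt a b ∨ ∃ x y, Q.lt x y ∧ ReflTransGen (ltUnion P Q) a x ∧
      ReflTransGen (ltUnion P Q) y b := by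
  induction h with
  | single hab => exact hab.imp_right fun hQ => ⟨_, _, hQ, .refl, .refl⟩
  | @tail b c hab hbc ih =>
    rcases hbc with hbc | hbc
    · refine ih.imp (fun hP => @lt_trans α P.toPreorder _ _ _ hP hbc) ?_
      exact fun ⟨x, y, hxy, hax, hyb⟩ => ⟨x, y, hxy, hax, hyb.tail (.inl hbc)⟩
    · exact .inr ⟨b, c, hbc, hab.to_reflTransGen, .refl⟩

theorem exists_lt_reflTransGen_of_transGen_ltUnion_self {a : α}
    (h : TransGen (ltUnion P Q) a a) :
    ∃ x y, Q.lt x y ∧ ReflTransGen (ltUnion P Q) y x := by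
  rcases lt_or_exists_lt_of_transGen_ltUnion h with hP | ⟨x, y, hxy, hax, hya⟩
  · exact absurd hP (@lt_irrefl α P.toPreorder a)
  · exact ⟨x, y, hxy, hya.trans hax⟩

end Cycles

section Ideals

variable {d : ℕ} {P Q : PartialOrder (Fin d)}

theorem exists_common_isLinExt_of_irrefl (h : ∀ a, ¬ TransGen (ltUnion P Q) a a) :
    ∃ σ : Equiv.Perm (Fin d), IsLinExt P σ ∧ IsLinExt Q σ := by
  have : IsStrictOrder (Fin d) (TransGen (ltUnion P Q)) :=
    { irrefl := h, trans := fun _ _ _ => TransGen.trans }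
  obtain ⟨σ, hσ⟩ := Fintype.exists_equiv_fin_strictMono_of_isStrictOrder (Fintype.card_fin d)
    (TransGen (ltUnion P Q))
  exact ⟨σ, fun a b hab => hσ a b (.single (.inl hab)), fun a b hab => hσ a b (.single (.inr hab))⟩

theorem rho_le_rho_of_isIdeal {I : Finset (Fin d)} (hI : IsIdeal P I) {a b : Fin d}
    (h : P.le a b) : rho I b ≤ rho I a := by
  by_cases hb : b ∈ I
  · simp [rho, hb, hI b hb a h]
  · simp only [rho, hb, if_false]
    split_ifs <;> norm_num

theorem exists_isIdeal_mem_notMem_of_lt {x y : Fin d} (h : P.lt x y) :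
    ∃ I, IsIdeal P I ∧ x ∈ I ∧ y ∉ I := by
  classical
  refine ⟨Finset.univ.filter fun j => P.le j x, fun i hi j hji => ?_, by simp, ?_⟩
  · simp only [Finset.mem_filter, Finset.mem_univ, true_and] at hi ⊢
    exact P.le_trans _ _ _ hji hi
  · simpa using @not_le_of_gt _ P.toPreorder _ _ h

theorem exists_dotProduct_rho_of_reflTransGen {a b : Fin d}
    (h : ReflTransGen (ltUnion P Q) a b) :
    ∃ v : Fin d → ℝ, (∀ J, IsIdeal Q J → 0 ≤ v ⬝ᵥ rho J) ∧
      ∀ I, IsIdeal P I → v ⬝ᵥ rho I ≤ rho I a - rho I b := by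
  induction h with
  | refl => exact ⟨0, fun J _ => by simp, fun I _ => by simp⟩
  | @tail b c _ hbc ih =>
    obtain ⟨v, hvQ, hvP⟩ := ih
    rcases hbc with hbc | hbc
    · refine ⟨v, hvQ, fun I hI => ?_⟩
      linarith [hvP I hI, rho_le_rho_of_isIdeal hI (@le_of_lt _ P.toPreorder _ _ hbc)]
    · refine ⟨v + (Pi.single b 1 - Pi.single c 1), fun J hJ => ?_, fun I hI => ?_⟩
      all_goals simp only [add_dotProduct, sub_dotProduct, single_one_dotProduct]
      · linarith [hvQ J hJ, rho_le_rho_of_isIdeal hJ (@le_of_lt _ Q.toPreorder _ _ hbc)]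
      · linarith [hvP I hI]

theorem GammaOO_subset_dotProduct_nonpos {f : Fin d → ℝ}
    (hP : ∀ I, IsIdeal P I → f ⬝ᵥ rho I ≤ 0) (hQ : ∀ J, IsIdeal Q J → 0 ≤ f ⬝ᵥ rho J) :
    GammaOO P Q ⊆ {x | f ⬝ᵥ x ≤ 0} := by
  refine convexHull_min ?_
    (convex_halfSpace_le ⟨dotProduct_add f, fun c x => dotProduct_smul c f x⟩ 0)
  rintro _ (⟨I, hI, rfl⟩ | ⟨_, ⟨J, hJ, rfl⟩, rfl⟩)
  · exact hP I hI
  · simpa [dotProduct_neg] using hQ J hJ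

theorem zero_notMem_interior_GammaOO_of_transGen_self {a : Fin d}
    (h : TransGen (ltUnion P Q) a a) : (0 : Fin d → ℝ) ∉ interior (GammaOO P Q) := by
  obtain ⟨x, y, hxy, hyx⟩ := exists_lt_reflTransGen_of_transGen_ltUnion_self h
  obtain ⟨v, hvQ, hvP⟩ := exists_dotProduct_rho_of_reflTransGen hyx
  obtain ⟨Jx, hJx, hxJx, hyJx⟩ := exists_isIdeal_mem_notMem_of_lt hxy
  set f := Pi.single x 1 - Pi.single y 1 + v
  have hf (z : Fin d → ℝ) : f ⬝ᵥ z = z x - z y + v ⬝ᵥ z := by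
    simp only [f, add_dotProduct, sub_dotProduct, single_one_dotProduct]
  refine zero_notMem_interior_of_subset_dotProduct_nonpos (u := rho Jx) ?_
    (GammaOO_subset_dotProduct_nonpos (f := f) (fun I hI => ?_) (fun J hJ => ?_))
  · simp only [hf, rho, hxJx, hyJx, if_true, if_false]
    linarith [hvQ Jx hJx]
  · linarith [hf (rho I), hvP I hI]
  · linarith [hf (rho J), hvQ J hJ, rho_le_rho_of_isIdeal hJ (@le_of_lt _ Q.toPreorder _ _ hxy)]

end Ideals

section InitialSegments

variable {d : ℕ}

def initSeg (σ : Equiv.Perm (Fin d)) (n : ℕ) : Finset (Fin d) :=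
  Finset.univ.filter fun i => (σ.symm i : ℕ) < n

theorem isIdeal_initSeg {P : PartialOrder (Fin d)} {σ : Equiv.Perm (Fin d)} (hσ : IsLinExt P σ)
    (n : ℕ) : IsIdeal P (initSeg σ n) := by
  intro i hi j hji
  simp only [initSeg, Finset.mem_filter, Finset.mem_univ, true_and] at hi ⊢
  rcases eq_or_ne j i with rfl | hne
  · exact hi
  · have hlt : P.lt (σ (σ.symm j)) (σ (σ.symm i)) := by
      simpa using @lt_of_le_of_ne _ P _ _ hji hne
    exact (Fin.lt_def.mp (hσ _ _ hlt)).trans hi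

theorem rho_initSeg_succ_sub (σ : Equiv.Perm (Fin d)) (i : Fin d) :
    rho (initSeg σ (σ.symm i + 1)) - rho (initSeg σ (σ.symm i)) = Pi.single i 1 := by
  ext j
  by_cases hj : j = i
  · simp [rho, initSeg, hj]
  · have hne : (σ.symm j : ℕ) ≠ σ.symm i := Fin.val_ne_of_ne (σ.symm.injective.ne hj)
    simp only [rho, initSeg, Finset.mem_filter, Finset.mem_univ, true_and, Pi.sub_apply,
      Pi.single_apply, hj, if_false]
    split_ifs <;> norm_num <;> omega

theorem span_range_rho_initSeg (σ : Equiv.Perm (Fin d)) :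
    Submodule.span ℝ (Set.range fun n => rho (initSeg σ n)) = ⊤ := by
  rw [eq_top_iff, ← (Pi.basisFun ℝ (Fin d)).span_eq, Submodule.span_le]
  rintro _ ⟨i, rfl⟩
  rw [Pi.basisFun_apply, ← rho_initSeg_succ_sub]
  exact Submodule.sub_mem _ (Submodule.subset_span ⟨_, rfl⟩) (Submodule.subset_span ⟨_, rfl⟩)

theorem zero_mem_interior_GammaOO_of_isLinExt {P Q : PartialOrder (Fin d)}
    {σ : Equiv.Perm (Fin d)} (hP : IsLinExt P σ) (hQ : IsLinExt Q σ) :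
    (0 : Fin d → ℝ) ∈ interior (GammaOO P Q) := by
  set T := Set.range fun n => rho (initSeg σ n)
  have h0 : (0 : Fin d → ℝ) ∈ T := ⟨0, by ext; simp [rho, initSeg]⟩
  refine interior_mono (convexHull_mono ?_) (zero_mem_interior_convexHull_of_neg_subset
    (Or.inl h0 : _ ∈ T ∪ -T) (by rw [Set.union_neg, neg_neg, Set.union_comm])
    (eq_top_mono (Submodule.span_mono Set.subset_union_left) (span_range_rho_initSeg σ)))
  rintro _ (⟨n, rfl⟩ | ⟨n, hn⟩)
  · exact Or.inl ⟨_, isIdeal_initSeg hP n, rfl⟩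
  · exact Or.inr ⟨_, ⟨_, isIdeal_initSeg hQ n, rfl⟩, by simp [hn]⟩

end InitialSegments

theorem statement4 {d : ℕ} (P Q : PartialOrder (Fin d)) :
    (0 : Fin d → ℝ) ∈ interior (GammaOO P Q) ↔
      ∃ σ : Equiv.Perm (Fin d), IsLinExt P σ ∧ IsLinExt Q σ := by
  refine ⟨fun h0 => ?_, fun ⟨σ, hP, hQ⟩ => zero_mem_interior_GammaOO_of_isLinExt hP hQ⟩
  by_contra hno
  obtain ⟨a, ha⟩ : ∃ a, TransGen (ltUnion P Q) a a := by
    by_contra! hacyclic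
    exact hno (exists_common_isLinExt_of_irrefl hacyclic)
  exact zero_notMem_interior_GammaOO_of_transGen_self ha h0
end

section
/- Let P and Q be finite posets with |P| = |Q| = d. The origin of ℝ^d is an interior point of the polytope Γ(O(P), −C(Q)) = conv({ρ(I) : I ∈ J(P)} ∪ {−ρ(A) : A ∈ A(Q)}), and Γ(O(P), −C(Q)) has dimension d. -/
open Set MeasureTheory Pointwise

/-!
The whole poset is an ideal of `P` and every singleton is an antichain of `Q`, so `𝟙` and the
`-eᵢ` are vertices of `Γ(O(P), -C(Q))`, as is `0` (the empty ideal). Since `𝟙 + ∑ᵢ (-eᵢ) = 0`,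
every `x` with `‖x‖∞ < ε = 1 / (2d + 1)` is the convex combination
`ε • 𝟙 + ∑ᵢ (ε - xᵢ) • (-eᵢ) + (1 - ε - ∑ᵢ (ε - xᵢ)) • 0`, so the polytope contains a ball
around the origin; a convex set with nonempty interior affinely spans the whole space.
-/

theorem Convex.sum_smul_mem_of_zero_mem {ι E : Type*} [AddCommGroup E] [Module ℝ E]
    {s : Set E} (hs : Convex ℝ s) (h₀ : (0 : E) ∈ s) {t : Finset ι} {w : ι → ℝ} {z : ι → E}
    (hw₀ : ∀ i ∈ t, 0 ≤ w i) (hw₁ : ∑ i ∈ t, w i ≤ 1) (hz : ∀ i ∈ t, z i ∈ s) :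
    ∑ i ∈ t, w i • z i ∈ s := by
  rcases (Finset.sum_nonneg hw₀).eq_or_lt with hzero | hpos
  · have hw : ∀ i ∈ t, w i = 0 := (Finset.sum_eq_zero_iff_of_nonneg hw₀).1 hzero.symm
    rwa [Finset.sum_eq_zero fun i hi => by rw [hw i hi, zero_smul]]
  · have hsum : ∑ i ∈ t, w i • z i = (∑ i ∈ t, w i) • t.centerMass w z := by
      rw [Finset.centerMass, smul_smul, mul_inv_cancel₀ hpos.ne', one_smul]
    rw [hsum]
    exact hs.smul_mem_of_zero_mem h₀ (hs.centerMass_mem hw₀ hpos hz) ⟨hpos.le, hw₁⟩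

theorem Convex.ball_subset_of_one_mem_of_neg_single_mem {ι : Type*} [Fintype ι] [DecidableEq ι]
    {s : Set (ι → ℝ)} (hs : Convex ℝ s) (h₀ : (0 : ι → ℝ) ∈ s) (h₁ : (1 : ι → ℝ) ∈ s)
    (hneg : ∀ i, -Pi.single i 1 ∈ s) :
    Metric.ball (0 : ι → ℝ) (2 * Fintype.card ι + 1)⁻¹ ⊆ s := by
  set ε : ℝ := (2 * Fintype.card ι + 1)⁻¹ with hε
  have hεpos : 0 < ε := by positivity
  intro x hx
  have hxε : ∀ i, |x i| < ε := fun i =>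
    (norm_le_pi_norm x i).trans_lt (mem_ball_zero_iff.1 hx)
  let w : Option ι → ℝ := fun o => o.elim ε fun i => ε - x i
  let z : Option ι → ι → ℝ := fun o => o.elim 1 fun i => -Pi.single i 1
  have hcomb : ∑ o, w o • z o = x := by
    ext j
    simp [w, z, Fintype.sum_option, Pi.single_apply]
  have hw₀ : ∀ o ∈ Finset.univ, 0 ≤ w o := by
    rintro (_ | i) -
    · exact hεpos.le
    · exact sub_nonneg.2 ((le_abs_self _).trans (hxε i).le)
  have hw₁ : ∑ o, w o ≤ 1 :=
    calc ∑ o, w o = ε + ∑ i, (ε - x i) := Fintype.sum_option w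
      _ ≤ ε + ∑ _i : ι, 2 * ε := by
        gcongr with i
        linarith [neg_abs_le (x i), hxε i]
      _ = 1 := by
        rw [Finset.sum_const, Finset.card_univ, nsmul_eq_mul, hε]
        field_simp
        ring
  have hz : ∀ o ∈ Finset.univ, z o ∈ s := by
    rintro (_ | i) -
    exacts [h₁, hneg i]
  rw [← hcomb]
  exact hs.sum_smul_mem_of_zero_mem h₀ hw₀ hw₁ hz

theorem zero_mem_idealVerts {d : ℕ} (P : PartialOrder (Fin d)) : (0 : Fin d → ℝ) ∈ idealVerts P :=
  ⟨∅, by simp [IsIdeal], by ext; simp [rho]⟩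

theorem one_mem_idealVerts {d : ℕ} (P : PartialOrder (Fin d)) : (1 : Fin d → ℝ) ∈ idealVerts P :=
  ⟨Finset.univ, by simp [IsIdeal], by ext; simp [rho]⟩

theorem single_mem_acVerts {d : ℕ} (P : PartialOrder (Fin d)) (i : Fin d) :
    Pi.single i 1 ∈ acVerts P :=
  ⟨{i}, by simp [IsAC], by ext j; simp [rho, Pi.single_apply]⟩

theorem statement5 {d : ℕ} (P Q : PartialOrder (Fin d)) :
    (0 : Fin d → ℝ) ∈ interior (GammaOC P Q) ∧
    affineSpan ℝ (GammaOC P Q) = ⊤ := by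
  have hconv : Convex ℝ (GammaOC P Q) := convex_convexHull ℝ _
  have hvert : idealVerts P ∪ (fun v => -v) '' acVerts Q ⊆ GammaOC P Q := subset_convexHull ℝ _
  have hball := hconv.ball_subset_of_one_mem_of_neg_single_mem
    (hvert (Or.inl (zero_mem_idealVerts P))) (hvert (Or.inl (one_mem_idealVerts P)))
    fun i => hvert (Or.inr (mem_image_of_mem _ (single_mem_acVerts Q i)))
  have hint : (0 : Fin d → ℝ) ∈ interior (GammaOC P Q) :=
    mem_interior_iff_mem_nhds.2 (Metric.mem_nhds_iff.2 ⟨_, by positivity, hball⟩)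
  exact ⟨hint, hconv.interior_nonempty_iff_affineSpan_eq_top.1 ⟨0, hint⟩⟩
end

section
/- Let P and Q be finite posets with |P| = |Q| = d. Then the polytope Γ(C(P), −C(Q)) = conv({ρ(A) : A ∈ A(P)} ∪ {−ρ(B) : B ∈ A(Q)}) is a Fano polytope: the origin is the unique lattice point in its interior. -/
open Set MeasureTheory Pointwise

/-! The polytope is squeezed between the cross-polytope `conv {±eᵢ}`, whose vertices are the
indicator vectors of singleton antichains, and the cube `[-1, 1]ᵈ`, since every vertex is a
`0/±1` vector. The first puts the origin in its interior; the second confines the interior to the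
open cube `(-1, 1)ᵈ`, whose only lattice point is the origin. -/

section CrossPolytope

variable {ι E : Type*} [Fintype ι]

theorem Convex.sum_smul_mem_of_zero_mem_s6 [AddCommGroup E] [Module ℝ E] {s : Set E}
    (hs : Convex ℝ s) (h0 : (0 : E) ∈ s) {w : ι → ℝ} {v : ι → E} (hw : ∀ i, 0 ≤ w i)
    (hw1 : ∑ i, w i ≤ 1) (hv : ∀ i, v i ∈ s) : ∑ i, w i • v i ∈ s := by
  -- the missing weight `1 - ∑ w` is put on the point `0`
  have h := hs.sum_mem (t := Finset.univ) (w := fun o : Option ι => o.elim (1 - ∑ i, w i) w)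
    (z := fun o => o.elim 0 v)
    (by rintro (_ | i) - <;> simp [hw, hw1]) (by simp [Fintype.sum_option])
    (by rintro (_ | i) - <;> simp [h0, hv])
  simpa [Fintype.sum_option] using h

variable [DecidableEq ι] {S : Set (ι → ℝ)}

theorem Convex.setOf_sum_abs_le_one_subset (hS : Convex ℝ S) (h0 : 0 ∈ S)
    (hpos : ∀ i, Pi.single i 1 ∈ S) (hneg : ∀ i, -Pi.single i 1 ∈ S) :
    {x : ι → ℝ | ∑ i, |x i| ≤ 1} ⊆ S := by
  intro x hx
  have hx_eq : x = ∑ i, |x i| • (if 0 ≤ x i then Pi.single i 1 else -Pi.single i 1) := by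
    conv_lhs => rw [pi_eq_sum_univ x]
    refine Finset.sum_congr rfl fun i _ => ?_
    ext j
    rcases eq_or_ne i j with rfl | hij
    · split_ifs with h
      · simp [abs_of_nonneg h]
      · simp [abs_of_neg (not_le.mp h)]
    · split_ifs <;> simp [hij, hij.symm]
  rw [hx_eq]
  exact hS.sum_smul_mem_of_zero_mem_s6 h0 (fun i => abs_nonneg _) hx
    fun i => by split_ifs <;> simp [hpos, hneg]

theorem Convex.zero_mem_interior (hS : Convex ℝ S) (h0 : 0 ∈ S)
    (hpos : ∀ i, Pi.single i 1 ∈ S) (hneg : ∀ i, -Pi.single i 1 ∈ S) :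
    (0 : ι → ℝ) ∈ interior S := by
  have hopen : IsOpen {x : ι → ℝ | ∑ i, |x i| < 1} :=
    isOpen_lt (by fun_prop) continuous_const
  refine interior_maximal (fun x hx => ?_) hopen (by simp)
  exact hS.setOf_sum_abs_le_one_subset h0 hpos hneg (le_of_lt (show ∑ i, |x i| < 1 from hx))

end CrossPolytope

theorem interior_subset_pi_Ioo_of_subset_pi_Icc {ι : Type*} [Finite ι] {S : Set (ι → ℝ)}
    {a b : ℝ} (hS : S ⊆ pi univ fun _ => Icc a b) : interior S ⊆ pi univ fun _ => Ioo a b := by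
  rw [← interior_Icc, ← interior_pi_set Set.finite_univ]
  exact interior_mono hS

theorem IsLatticePt.eq_zero_of_mem_pi_Ioo {d : ℕ} {x : Fin d → ℝ} (hx : IsLatticePt x)
    (hbox : x ∈ pi univ fun _ => Ioo (-1 : ℝ) 1) : x = 0 := by
  funext i
  obtain ⟨z, hz⟩ := hx i
  obtain ⟨hlo, hhi⟩ := hbox i (mem_univ i)
  rw [hz] at hlo hhi ⊢
  have : z = 0 := by
    have : (-1 : ℤ) < z := by exact_mod_cast hlo
    have : z < 1 := by exact_mod_cast hhi
    omega
  simp [this]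

section GammaCC

variable {d : ℕ}

theorem IsAC.empty (P : PartialOrder (Fin d)) : IsAC P ∅ := by
  simp [IsAC]

theorem IsAC.singleton (P : PartialOrder (Fin d)) (i : Fin d) : IsAC P {i} := by
  simp [IsAC]

theorem rho_empty : rho (∅ : Finset (Fin d)) = 0 := by
  funext j; simp [rho]

theorem rho_singleton (i : Fin d) : rho {i} = Pi.single i 1 := by
  funext j; simp [rho, Pi.single_apply]

theorem rho_mem_Icc (S : Finset (Fin d)) (i : Fin d) : rho S i ∈ Icc (0 : ℝ) 1 := by
  unfold rho; split_ifs <;> norm_num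

theorem GammaCC_subset_pi_Icc (P Q : PartialOrder (Fin d)) :
    GammaCC P Q ⊆ pi univ fun _ => Icc (-1 : ℝ) 1 := by
  refine convexHull_min ?_ (convex_pi fun _ _ => convex_Icc _ _)
  rintro _ (⟨A, -, rfl⟩ | ⟨_, ⟨A, -, rfl⟩, rfl⟩) i -
  · exact Icc_subset_Icc (by norm_num) le_rfl (rho_mem_Icc A i)
  · obtain ⟨h0, h1⟩ := rho_mem_Icc A i
    exact ⟨neg_le_neg h1, (neg_nonpos.mpr h0).trans zero_le_one⟩

theorem zero_mem_interior_GammaCC (P Q : PartialOrder (Fin d)) :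
    (0 : Fin d → ℝ) ∈ interior (GammaCC P Q) := by
  refine (convex_convexHull ℝ _).zero_mem_interior ?_ (fun i => ?_) (fun i => ?_) <;>
    apply subset_convexHull
  · exact Or.inl ⟨∅, IsAC.empty P, rho_empty.symm⟩
  · exact Or.inl ⟨{i}, IsAC.singleton P i, (rho_singleton i).symm⟩
  · exact Or.inr ⟨_, ⟨{i}, IsAC.singleton Q i, (rho_singleton i).symm⟩, rfl⟩

end GammaCC

theorem statement6 {d : ℕ} (P Q : PartialOrder (Fin d)) :
    (0 : Fin d → ℝ) ∈ interior (GammaCC P Q) ∧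
    ∀ x ∈ interior (GammaCC P Q), IsLatticePt x → x = 0 :=
  ⟨zero_mem_interior_GammaCC P Q, fun _ hx hlat =>
    hlat.eq_zero_of_mem_pi_Ioo
      (interior_subset_pi_Ioo_of_subset_pi_Icc (GammaCC_subset_pi_Icc P Q) hx)⟩
end

section
/- Let P and Q be finite posets with |P| = |Q| = d. Then Γ(C(P), −C(Q)) is a normal polytope: for every positive integer N, every lattice point of N·Γ(C(P), −C(Q)) is a sum of N lattice points of Γ(C(P), −C(Q)). -/
open Set MeasureTheory Pointwise

/-!
Write a lattice point `a` of `N • Γ` as `a⁺ - a⁻`. For a chain `c₁` of `P` and a chain `c₂` of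
`Q`, the convex function `x ↦ ∑_{c₁} x⁺ + ∑_{c₂} x⁻` is at most `1` at the vertices of `Γ`,
because an antichain meets a chain at most once. Hence the heaviest chain of `P` under the weight
`a⁺` and the heaviest chain of `Q` under `a⁻` weigh `M₁ + M₂ ≤ N` together.

A weight `b : P → ℕ` under which every chain weighs at most `M` is a sum of `M` antichain
indicators: if `h i` is the weight of the heaviest chain with top `i`, then `h i + b j ≤ h j`
for `i < j`, so comparable elements have disjoint intervals `[h i - b i, h i)`, and the sets
`{i | k ∈ [h i - b i, h i)}` for `k < M` are antichains covering each `i` exactly `b i` times.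
So `a⁺` is a sum of `M₁` vertices `ρ(A)`, `a⁻` one of `N - M₁ ≥ M₂` vertices `ρ(B)`, and `a` is
the sum of the `N` lattice points `ρ(A)`, `-ρ(B)` of `Γ`.
-/

lemma natCast_toNat_eq_posPart {R : Type*} [Ring R] [LinearOrder R] [IsStrictOrderedRing R]
    (z : ℤ) : ((z.toNat : ℕ) : R) = (z : R)⁺ := by
  rw [← Int.cast_natCast, Int.toNat_eq_max, Int.cast_max, Int.cast_zero, posPart_def]

theorem convexOn_sum {𝕜 E ι : Type*} [Semiring 𝕜] [PartialOrder 𝕜] [AddCommMonoid E]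
    [SMul 𝕜 E] {β : Type*} [AddCommMonoid β] [PartialOrder β] [IsOrderedAddMonoid β]
    [Module 𝕜 β] {s : Set E} (hs : Convex 𝕜 s) {t : Finset ι} {f : ι → E → β}
    (hf : ∀ i ∈ t, ConvexOn 𝕜 s (f i)) : ConvexOn 𝕜 s (∑ i ∈ t, f i) :=
  Finset.sum_induction f (ConvexOn 𝕜 s) (fun _ _ => ConvexOn.add) (convexOn_const 0 hs) hf

section ChainDecomposition

variable {d : ℕ} (P : PartialOrder (Fin d)) (b : Fin d → ℕ)

open Classical in
noncomputable def chainsBelow (i : Fin d) : Finset (Finset (Fin d)) :=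
  Finset.univ.filter fun c => IsChain P.le (c : Set (Fin d)) ∧ ∀ j ∈ c, P.le j i

open Classical in
noncomputable def maxChainSum : ℕ :=
  (Finset.univ.filter fun c : Finset (Fin d) => IsChain P.le (c : Set (Fin d))).sup
    fun c => ∑ i ∈ c, b i

noncomputable def maxChainSumBelow (i : Fin d) : ℕ :=
  (chainsBelow P i).sup fun c => ∑ j ∈ c, b j

noncomputable def chainLayer (k : ℕ) : Finset (Fin d) :=
  Finset.univ.filter fun i => k ∈ Finset.Ico (maxChainSumBelow P b i - b i) (maxChainSumBelow P b i)

variable {P b}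

lemma mem_chainsBelow {i : Fin d} {c : Finset (Fin d)} :
    c ∈ chainsBelow P i ↔ IsChain P.le (c : Set (Fin d)) ∧ ∀ j ∈ c, P.le j i := by
  simp [chainsBelow]

lemma sum_le_maxChainSum {c : Finset (Fin d)} (hc : IsChain P.le (c : Set (Fin d))) :
    ∑ i ∈ c, b i ≤ maxChainSum P b := by
  classical
  exact Finset.le_sup (f := fun c => ∑ i ∈ c, b i) (Finset.mem_filter.mpr ⟨Finset.mem_univ c, hc⟩)

variable (P b) in
lemma exists_isChain_sum_eq_maxChainSum :
    ∃ c : Finset (Fin d), IsChain P.le (c : Set (Fin d)) ∧ ∑ i ∈ c, b i = maxChainSum P b := by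
  classical
  obtain ⟨c, hc, h⟩ := Finset.exists_mem_eq_sup
    (Finset.univ.filter fun c : Finset (Fin d) => IsChain P.le ↑c) ⟨∅, by simp⟩
    fun c => ∑ i ∈ c, b i
  exact ⟨c, (Finset.mem_filter.mp hc).2, h.symm⟩

lemma le_maxChainSumBelow (i : Fin d) : b i ≤ maxChainSumBelow P b i := by
  have := Finset.le_sup (f := fun c => ∑ j ∈ c, b j)
    (mem_chainsBelow.mpr ⟨by simp, by simp⟩ : {i} ∈ chainsBelow P i)
  simpa [maxChainSumBelow] using this

lemma maxChainSumBelow_le_maxChainSum (i : Fin d) : maxChainSumBelow P b i ≤ maxChainSum P b :=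
  Finset.sup_le fun _ hc => sum_le_maxChainSum (mem_chainsBelow.mp hc).1

lemma maxChainSumBelow_add_le {i j : Fin d} (hij : P.le i j) (hne : i ≠ j) :
    maxChainSumBelow P b i + b j ≤ maxChainSumBelow P b j := by
  obtain ⟨c, hc, hci⟩ := Finset.exists_mem_eq_sup (chainsBelow P i)
    ⟨∅, mem_chainsBelow.mpr ⟨by simp, by simp⟩⟩ fun c => ∑ j ∈ c, b j
  obtain ⟨hchain, hle⟩ := mem_chainsBelow.mp hc
  have hjc : j ∉ c := fun hj => hne (P.le_antisymm i j hij (hle j hj))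
  have hle' : ∀ k ∈ insert j c, P.le k j := by
    simp only [Finset.mem_insert, forall_eq_or_imp]
    exact ⟨P.le_refl j, fun k hk => P.le_trans k i j (hle k hk) hij⟩
  have hchain' : IsChain P.le ((insert j c : Finset (Fin d)) : Set (Fin d)) := by
    rw [Finset.coe_insert]
    exact hchain.insert fun k hk _ => Or.inr (hle' k (Finset.mem_insert_of_mem hk))
  have := Finset.le_sup (f := fun c => ∑ j ∈ c, b j) (mem_chainsBelow.mpr ⟨hchain', hle'⟩)
  rw [Finset.sum_insert hjc] at this
  rw [maxChainSumBelow, hci]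
  exact (add_comm _ _).trans_le this

lemma isAC_chainLayer (k : ℕ) : IsAC P (chainLayer P b k) := by
  intro i hi j hj hne
  simp only [chainLayer, Finset.mem_filter, Finset.mem_univ, Finset.mem_Ico, true_and] at hi hj
  refine ⟨fun h => ?_, fun h => ?_⟩
  · have := maxChainSumBelow_add_le (b := b) h hne
    omega
  · have := maxChainSumBelow_add_le (b := b) h hne.symm
    omega

lemma card_filter_mem_chainLayer {M : ℕ} (hM : maxChainSum P b ≤ M) (i : Fin d) :
    ((Finset.range M).filter fun k => i ∈ chainLayer P b k).card = b i := by
  have hIco : Finset.Ico (maxChainSumBelow P b i - b i) (maxChainSumBelow P b i) ⊆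
      Finset.range M := by
    intro k hk
    simp only [Finset.mem_Ico, Finset.mem_range] at hk ⊢
    exact hk.2.trans_le ((maxChainSumBelow_le_maxChainSum i).trans hM)
  have := le_maxChainSumBelow (P := P) (b := b) i
  simp only [chainLayer, Finset.mem_filter, Finset.mem_univ, true_and, Finset.filter_mem_eq_inter,
    Finset.inter_eq_right.mpr hIco, Nat.card_Ico]
  omega

theorem exists_isAC_sum_rho_eq {M : ℕ} (hM : maxChainSum P b ≤ M) :
    ∃ A : Fin M → Finset (Fin d), (∀ k, IsAC P (A k)) ∧ ∀ i, (b i : ℝ) = ∑ k, rho (A k) i := by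
  refine ⟨fun k => chainLayer P b k, fun k => isAC_chainLayer k, fun i => ?_⟩
  rw [Fin.sum_univ_eq_sum_range (fun k => rho (chainLayer P b k) i),
    ← card_filter_mem_chainLayer hM i]
  simp [rho, Finset.sum_boole]

end ChainDecomposition

section ChainPairSum

variable {d : ℕ} (c₁ c₂ : Finset (Fin d))

def chainPairSum (x : Fin d → ℝ) : ℝ := ∑ i ∈ c₁, (x i)⁺ + ∑ j ∈ c₂, (x j)⁻

lemma chainPairSum_smul {t : ℝ} (ht : 0 ≤ t) (x : Fin d → ℝ) :
    chainPairSum c₁ c₂ (t • x) = t * chainPairSum c₁ c₂ x := by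
  simp only [chainPairSum, Pi.smul_apply, smul_eq_mul, posPart_def, negPart_def, mul_add,
    Finset.mul_sum, ← mul_neg, mul_max_of_nonneg _ _ ht, mul_zero]

lemma convexOn_chainPairSum : ConvexOn ℝ univ (chainPairSum c₁ c₂) := by
  have hpos (i : Fin d) : ConvexOn ℝ univ fun x : Fin d → ℝ => (x i)⁺ :=
    ((LinearMap.proj i).convexOn convex_univ).sup (convexOn_const 0 convex_univ)
  have hneg (i : Fin d) : ConvexOn ℝ univ fun x : Fin d → ℝ => (x i)⁻ :=
    ((-LinearMap.proj i).convexOn convex_univ).sup (convexOn_const 0 convex_univ)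
  have hsum : chainPairSum c₁ c₂ =
      (∑ i ∈ c₁, fun x : Fin d → ℝ => (x i)⁺) + ∑ j ∈ c₂, fun x : Fin d → ℝ => (x j)⁻ := by
    funext x
    simp only [chainPairSum, Pi.add_apply, Finset.sum_apply]
  rw [hsum]
  exact (convexOn_sum convex_univ fun i _ => hpos i).add
    (convexOn_sum convex_univ fun j _ => hneg j)

end ChainPairSum

section Gamma

variable {d : ℕ} {P Q : PartialOrder (Fin d)}

lemma rho_nonneg (A : Finset (Fin d)) (i : Fin d) : 0 ≤ rho A i := by
  unfold rho
  split_ifs <;> norm_num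

lemma isLatticePt_rho (A : Finset (Fin d)) : IsLatticePt (rho A) := fun i =>
  ⟨if i ∈ A then 1 else 0, by unfold rho; split_ifs <;> norm_num⟩

lemma IsLatticePt.neg {x : Fin d → ℝ} (hx : IsLatticePt x) : IsLatticePt (-x) := fun i =>
  let ⟨z, hz⟩ := hx i
  ⟨-z, by simp [hz]⟩

lemma sum_rho_le_one {A c : Finset (Fin d)} (hA : IsAC P A) (hc : IsChain P.le (c : Set (Fin d))) :
    ∑ i ∈ c, rho A i ≤ 1 := by
  classical
  have hcard : (c ∩ A).card ≤ 1 :=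
    Finset.card_le_one.mpr fun x hx y hy => by
      simp only [Finset.mem_inter] at hx hy
      by_contra hne
      exact (hc hx.1 hy.1 hne).elim (hA x hx.2 y hy.2 hne).1 (hA x hx.2 y hy.2 hne).2
  simpa [rho, Finset.sum_boole] using hcard

lemma chainPairSum_le_one {c₁ c₂ : Finset (Fin d)} (hc₁ : IsChain P.le (c₁ : Set (Fin d)))
    (hc₂ : IsChain Q.le (c₂ : Set (Fin d))) {x : Fin d → ℝ} (hx : x ∈ GammaCC P Q) :
    chainPairSum c₁ c₂ x ≤ 1 := by
  suffices GammaCC P Q ⊆ {x ∈ univ | chainPairSum c₁ c₂ x ≤ 1} from (this hx).2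
  refine convexHull_min ?_ ((convexOn_chainPairSum c₁ c₂).convex_le 1)
  rintro _ (⟨A, hA, rfl⟩ | ⟨_, ⟨B, hB, rfl⟩, rfl⟩) <;> refine ⟨mem_univ _, ?_⟩
  · simpa [chainPairSum, posPart_eq_self.mpr (rho_nonneg A _),
      negPart_eq_zero.mpr (rho_nonneg A _)] using sum_rho_le_one hA hc₁
  · simpa [chainPairSum, posPart_eq_zero.mpr (neg_nonpos.mpr (rho_nonneg B _)),
      negPart_eq_neg.mpr (neg_nonpos.mpr (rho_nonneg B _))] using sum_rho_le_one hB hc₂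

lemma IsLatticePt.exists_natCast_eq_posPart_negPart {a : Fin d → ℝ} (ha : IsLatticePt a) :
    ∃ p n : Fin d → ℕ, ∀ i, (p i : ℝ) = (a i)⁺ ∧ (n i : ℝ) = (a i)⁻ := by
  choose z hz using ha
  refine ⟨fun i => (z i).toNat, fun i => (-z i).toNat, fun i => ?_⟩
  simp [natCast_toNat_eq_posPart, hz]

lemma maxChainSum_add_maxChainSum_le {N : ℕ} {x : Fin d → ℝ} (hx : x ∈ GammaCC P Q)
    {p n : Fin d → ℕ} (hpn : ∀ i, (p i : ℝ) = (((N : ℝ) • x) i)⁺ ∧ (n i : ℝ) = (((N : ℝ) • x) i)⁻) :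
    maxChainSum P p + maxChainSum Q n ≤ N := by
  obtain ⟨c₁, hc₁, hp⟩ := exists_isChain_sum_eq_maxChainSum P p
  obtain ⟨c₂, hc₂, hn⟩ := exists_isChain_sum_eq_maxChainSum Q n
  have : ((maxChainSum P p + maxChainSum Q n : ℕ) : ℝ) ≤ N :=
    calc ((maxChainSum P p + maxChainSum Q n : ℕ) : ℝ)
        = chainPairSum c₁ c₂ ((N : ℝ) • x) := by
          simp only [← hp, ← hn, chainPairSum, Nat.cast_add, Nat.cast_sum, hpn]
      _ = N * chainPairSum c₁ c₂ x := chainPairSum_smul c₁ c₂ N.cast_nonneg x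
      _ ≤ N * 1 := mul_le_mul_of_nonneg_left (chainPairSum_le_one hc₁ hc₂ hx) N.cast_nonneg
      _ = N := mul_one _
  exact_mod_cast this

lemma exists_sum_eq_of_maxChainSum_add_le {p n : Fin d → ℕ} {N : ℕ}
    (h : maxChainSum P p + maxChainSum Q n ≤ N) :
    ∃ f : Fin N → (Fin d → ℝ), (∀ k, f k ∈ acVerts P ∪ (fun v => -v) '' acVerts Q) ∧
      ∀ i, (p i : ℝ) - n i = ∑ k, f k i := by
  obtain ⟨r, rfl⟩ : ∃ r, N = maxChainSum P p + r := ⟨N - maxChainSum P p, by omega⟩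
  obtain ⟨A, hA, hp⟩ := exists_isAC_sum_rho_eq (b := p) le_rfl
  obtain ⟨B, hB, hn⟩ := exists_isAC_sum_rho_eq (P := Q) (b := n) (M := r) (by omega)
  refine ⟨Fin.append (fun k => rho (A k)) (fun k => -rho (B k)), fun k => ?_, fun i => ?_⟩
  · refine Fin.addCases (fun k => ?_) (fun k => ?_) k
    · rw [Fin.append_left]
      exact Or.inl ⟨A k, hA k, rfl⟩
    · rw [Fin.append_right]
      exact Or.inr ⟨rho (B k), ⟨B k, hB k, rfl⟩, rfl⟩
  · simp [Fin.sum_univ_add, hp, hn, sub_eq_add_neg]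

end Gamma

theorem statement7 {d : ℕ} (P Q : PartialOrder (Fin d)) :
    ∀ N : ℕ, 0 < N → ∀ a ∈ dil N (GammaCC P Q), IsLatticePt a →
      ∃ f : Fin N → (Fin d → ℝ),
        (∀ k, f k ∈ GammaCC P Q ∧ IsLatticePt (f k)) ∧ a = ∑ k, f k := by
  rintro N - a ⟨x, hx, rfl⟩ ha
  obtain ⟨p, n, hpn⟩ := ha.exists_natCast_eq_posPart_negPart
  obtain ⟨f, hf, hsum⟩ := exists_sum_eq_of_maxChainSum_add_le
    (maxChainSum_add_maxChainSum_le hx hpn)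
  refine ⟨f, fun k => ⟨subset_convexHull ℝ _ (hf k), ?_⟩, funext fun i => ?_⟩
  · rcases hf k with ⟨A, -, hA⟩ | ⟨_, ⟨B, -, rfl⟩, hB⟩
    · exact hA ▸ isLatticePt_rho A
    · exact hB ▸ (isLatticePt_rho B).neg
  · rw [Finset.sum_apply, ← hsum, (hpn i).1, (hpn i).2, posPart_sub_negPart]
end

section
/- Let P and Q be posets with |P| = |Q| = d ≥ 2. If Γ(C(P), −C(Q)) is simplicial, then P has no antichain of size ≥ 3 (i.e., every set of 3 pairwise incomparable elements of P is empty; equivalently A_k(P) = ∅ for k ≥ 3), and likewise for Q. -/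
open Set MeasureTheory Pointwise

/-! If `a, b, c` are pairwise incomparable in `P`, then on the face of `Γ = GammaCC P Q` where the
coordinate `x a` attains its maximum `1` lie the points `ρ{a}, ρ{a,b}, ρ{a,c}, ρ{a,b,c}`. The
valid inequalities `x i ≤ 1` and `x a - x i ≤ 1` confine this face to the unit cube, whose vertices
they are, so they are vertices of the face. Since `ρ{a} + ρ{a,b,c} = ρ{a,b} + ρ{a,c}`, they are
affinely dependent, and the face is not a simplex. The claim for `Q` follows by applying this to
`-Γ = GammaCC Q P`, which is simplicial along with `Γ`. -/

theorem IsExposed.image_continuousLinearEquiv {E F : Type*} [AddCommGroup E] [Module ℝ E]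
    [TopologicalSpace E] [AddCommGroup F] [Module ℝ F] [TopologicalSpace F] {A B : Set E}
    (hAB : IsExposed ℝ A B) (e : E ≃L[ℝ] F) : IsExposed ℝ (e '' A) (e '' B) := by
  rintro ⟨-, x, hx, rfl⟩
  obtain ⟨l, rfl⟩ := hAB ⟨x, hx⟩
  refine ⟨l.comp (e.symm : F →L[ℝ] E), ?_⟩
  ext y
  simp only [e.image_eq_preimage_symm, mem_preimage, mem_ofPred_eq, ContinuousLinearMap.comp_apply,
    ContinuousLinearEquiv.coe_coe, and_congr_right_iff]
  exact fun _ => e.symm.surjective.forall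

theorem AffineIndependent.mem_of_add_eq_add {k E : Type*} [Ring k] [Nontrivial k]
    [AddCommGroup E] [Module k E] {s : Set E} (hs : AffineIndependent k ((↑) : s → E))
    {x y z w : E} (hx : x ∈ s) (hy : y ∈ s) (hz : z ∈ s) (hw : w ∈ s) (h : x + w = y + z) :
    w ∈ ({x, y, z} : Set E) := by
  by_contra hw'
  apply hs.notMem_affineSpan_sdiff ⟨w, hw⟩ univ
  have hspan : w ∈ affineSpan k {x, y, z} := by
    have hw_eq : w = (y -ᵥ x) +ᵥ z := by
      rw [vsub_eq_sub, vadd_eq_add]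
      linear_combination (norm := abel) h
    rw [hw_eq]
    exact AffineSubspace.vadd_mem_of_mem_direction
      (AffineSubspace.vsub_mem_direction (mem_affineSpan k (by simp)) (mem_affineSpan k (by simp)))
      (mem_affineSpan k (by simp))
  refine affineSpan_mono k ?_ hspan
  rintro v hv
  refine ⟨⟨v, ?_⟩, ⟨trivial, ?_⟩, rfl⟩
  · rcases hv with rfl | rfl | rfl <;> assumption
  · rw [Set.mem_singleton_iff, Subtype.mk.injEq]
    rintro rfl
    exact hw' hv

namespace IsSimplicialPolytope

variable {d : ℕ} {S : Set (Fin d → ℝ)}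

theorem affineIndependent_extremePoints (hS : IsSimplicialPolytope S) {F : Set (Fin d → ℝ)}
    (hF : IsExposed ℝ S F) (hFS : F ≠ S) :
    AffineIndependent ℝ ((↑) : F.extremePoints ℝ → Fin d → ℝ) := by
  obtain ⟨V, -, hV, rfl⟩ := hS F hF hFS
  exact hV.mono extremePoints_convexHull_subset

theorem image (hS : IsSimplicialPolytope S) (e : (Fin d → ℝ) ≃L[ℝ] (Fin d → ℝ)) :
    IsSimplicialPolytope (e '' S) := by
  intro F hF hFS
  have hF' : IsExposed ℝ S (e.symm '' F) := by
    simpa [Set.image_image] using hF.image_continuousLinearEquiv e.symm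
  obtain ⟨V, hVfin, hV, hFV⟩ := hS _ hF' (fun h => hFS (by rw [← h, e.image_symm_image]))
  refine ⟨e '' V, hVfin.image e, ?_, ?_⟩
  · exact (e.toLinearEquiv.toAffineEquiv.affineIndependent_set_of_eq_iff).2 hV
  · calc F = e '' (e.symm '' F) := (e.image_symm_image F).symm
      _ = convexHull ℝ (e '' V) := by rw [hFV]; exact e.toLinearMap.image_convexHull V

theorem neg (hS : IsSimplicialPolytope S) : IsSimplicialPolytope (-S) := by
  simpa [Set.image_neg_eq_neg] using hS.image (.neg ℝ)

end IsSimplicialPolytope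

section GammaCC

variable {d : ℕ}

theorem rho_union_add_rho_inter (s t : Finset (Fin d)) :
    rho (s ∪ t) + rho (s ∩ t) = rho s + rho t := by
  funext i
  simp only [rho, Pi.add_apply, Finset.mem_union, Finset.mem_inter]
  split_ifs <;> simp_all

theorem rho_mem_extremePoints_unitCube (S : Finset (Fin d)) :
    rho S ∈ (univ.pi fun _ => Icc (0 : ℝ) 1).extremePoints ℝ := by
  rw [extremePoints_pi]
  intro i _
  rw [extremePoints_Icc zero_le_one]
  unfold rho
  split_ifs <;> simp

theorem IsAC.subset {P : PartialOrder (Fin d)} {A B : Finset (Fin d)} (hA : IsAC P A)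
    (hBA : B ⊆ A) : IsAC P B :=
  fun i hi j hj => hA i (hBA hi) j (hBA hj)

theorem neg_GammaCC (P Q : PartialOrder (Fin d)) : -GammaCC P Q = GammaCC Q P := by
  rw [GammaCC, GammaCC, ← convexHull_neg, Set.union_neg, Set.image_neg_eq_neg,
    Set.image_neg_eq_neg, neg_neg, Set.union_comm]

theorem rho_mem_GammaCC {P : PartialOrder (Fin d)} (Q : PartialOrder (Fin d)) {S : Finset (Fin d)}
    (hS : IsAC P S) : rho S ∈ GammaCC P Q :=
  subset_convexHull ℝ _ (Or.inl ⟨S, hS, rfl⟩)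

theorem GammaCC_subset (P Q : PartialOrder (Fin d)) (a : Fin d) :
    GammaCC P Q ⊆ {x | ∀ i, x i ≤ 1 ∧ x a - x i ≤ 1} := by
  refine convexHull_min ?_ ?_
  · rintro _ (⟨S, -, rfl⟩ | ⟨_, ⟨T, -, rfl⟩, rfl⟩) i <;> simp only [rho, Pi.neg_apply] <;>
      split_ifs <;> norm_num
  · intro x hx y hy s t hs ht hst i
    obtain ⟨hx₁, hx₂⟩ := hx i
    obtain ⟨hy₁, hy₂⟩ := hy i
    simp only [Pi.add_apply, Pi.smul_apply, smul_eq_mul]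
    constructor <;> nlinarith

theorem IsAC.card_le_two {P Q : PartialOrder (Fin d)} {A : Finset (Fin d)} (hA : IsAC P A)
    (hΓ : IsSimplicialPolytope (GammaCC P Q)) : A.card ≤ 2 := by
  by_contra! hcard
  obtain ⟨a, ha, b, hb, c, hc, hab, hac, hbc⟩ := Finset.two_lt_card.1 hcard
  set F := (ContinuousLinearMap.proj a : (Fin d → ℝ) →L[ℝ] ℝ).toExposed (GammaCC P Q)
  have hF : ∀ S ⊆ A, a ∈ S → rho S ∈ F := fun S hSA haS =>
    ⟨rho_mem_GammaCC Q (hA.subset hSA),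
      fun y hy => by simpa [rho, haS] using (GammaCC_subset P Q a hy a).1⟩
  have hFa : ∀ x ∈ F, 1 ≤ x a := fun x hx => by
    simpa [rho] using hx.2 _ (hF {a} (by simpa using ha) (by simp)).1
  have hFcube : F ⊆ univ.pi fun _ => Icc 0 1 := fun x hx i _ => by
    have hxi := GammaCC_subset P Q a hx.1 i
    exact ⟨by linarith [hxi.2, hFa x hx], hxi.1⟩
  have hFne : F ≠ GammaCC P Q := fun hFΓ => by
    have h0 : rho ∅ ∈ F := hFΓ ▸ rho_mem_GammaCC Q (hA.subset (Finset.empty_subset A))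
    exact absurd (hFa _ h0) (by simp [rho])
  have hext : ∀ S ⊆ A, a ∈ S → rho S ∈ F.extremePoints ℝ := fun S hSA haS =>
    inter_extremePoints_subset_extremePoints_of_subset hFcube
      ⟨hF S hSA haS, rho_mem_extremePoints_unitCube S⟩
  set s : Finset (Fin d) := {a, b}
  set t : Finset (Fin d) := {a, c}
  have hsA : s ⊆ A := by simp [s, Finset.insert_subset_iff, ha, hb]
  have htA : t ⊆ A := by simp [t, Finset.insert_subset_iff, ha, hc]
  have hindep := hΓ.affineIndependent_extremePoints ContinuousLinearMap.toExposed.isExposed hFne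
  have hunion : rho (s ∪ t) ∈ ({rho (s ∩ t), rho s, rho t} : Set (Fin d → ℝ)) :=
    hindep.mem_of_add_eq_add (hext _ (Finset.inter_subset_left.trans hsA) (by simp [s, t]))
      (hext s hsA (by simp [s])) (hext t htA (by simp [t]))
      (hext _ (Finset.union_subset hsA htA) (by simp [s]))
      (by rw [add_comm, rho_union_add_rho_inter])
  rcases hunion with h | h | h
  · simpa [rho, s, t, hab.symm, hbc] using congrFun h b
  · simpa [rho, s, t, hac.symm, hbc.symm] using congrFun h c
  · simpa [rho, s, t, hab.symm, hbc] using congrFun h b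

end GammaCC

theorem statement13_general {d : ℕ} (P Q : PartialOrder (Fin d))
    (h : IsSimplicialPolytope (GammaCC P Q)) :
    (∀ A : Finset (Fin d), IsAC P A → A.card ≤ 2) ∧
    (∀ B : Finset (Fin d), IsAC Q B → B.card ≤ 2) :=
  ⟨fun _ hA => hA.card_le_two h, fun _ hB => hB.card_le_two (neg_GammaCC P Q ▸ h.neg)⟩

theorem statement13 {d : ℕ} (hd : 2 ≤ d) (P Q : PartialOrder (Fin d))
    (h : IsSimplicialPolytope (GammaCC P Q)) :
    (∀ A : Finset (Fin d), IsAC P A → A.card ≤ 2) ∧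
    (∀ B : Finset (Fin d), IsAC Q B → B.card ≤ 2) :=
  statement13_general P Q h
end
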